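/- arXiv:2512.09443 — 11 statements merged into one kernel-verified Lean document; each statement's English description precedes it below -/
import Mathlib

section
/- The set of commutators [A,B] where A and B are Hermitian n×n complex matrices equals the set of traceless skew-Hermitian n×n complex matrices, i.e., equals su(n). -/
open Matrix Complex

noncomputable section AuxSu

variable {n : ℕ}

/-- The DFT matrix. -/
noncomputable def dftM (n : ℕ) : Matrix (Fin n) (Fin n) ℂ :=
  Matrix.of fun j k => Complex.exp (2 * Real.pi * Complex.I * (j * k) / n) / (Real.sqrt n : ℂ)

lemma dftM_term (hn : 0 < n) (m j k : Fin n) :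
    star (dftM n m j) * dftM n m k
      = Complex.exp (2 * Real.pi * Complex.I * (m * ((k : ℂ) - j)) / n) / n := by
  have hs : ((Real.sqrt n : ℝ) : ℂ) * ((Real.sqrt n : ℝ) : ℂ) = (n : ℂ) := by
    rw [← Complex.ofReal_mul, Real.mul_self_sqrt (Nat.cast_nonneg n)]
    norm_cast
  simp only [dftM, Matrix.of_apply, star_div₀, Complex.star_def, ← Complex.exp_conj]
  have hc : (starRingEnd ℂ) (2 * Real.pi * Complex.I * ((m : ℂ) * j) / n)
      = -(2 * Real.pi * Complex.I * ((m : ℂ) * j) / n) := by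
    simp only [map_div₀, _root_.map_mul, Complex.conj_I, Complex.conj_ofReal,
      map_natCast, map_ofNat]
    ring
  rw [hc]
  have hstar : (starRingEnd ℂ) ((Real.sqrt n : ℝ) : ℂ) = ((Real.sqrt n : ℝ) : ℂ) :=
    Complex.conj_ofReal _
  rw [hstar, div_mul_div_comm, ← Complex.exp_add, hs]
  congr 1
  ring

lemma dftM_sum_ne (hn : 0 < n) {j k : Fin n} (hjk : j ≠ k) :
    ∑ m : Fin n, Complex.exp (2 * Real.pi * Complex.I * ((m : ℂ) * ((k : ℂ) - j)) / n) = 0 := by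
  set z : ℂ := 2 * Real.pi * Complex.I * ((k : ℂ) - j) / n with hz
  have hterm : ∀ m : ℕ, Complex.exp (2 * Real.pi * Complex.I * ((m : ℂ) * ((k : ℂ) - j)) / n)
      = Complex.exp z ^ m := by
    intro m
    rw [← Complex.exp_nat_mul]
    congr 1
    rw [hz]; ring
  have hn' : (n : ℂ) ≠ 0 := Nat.cast_ne_zero.mpr hn.ne'
  have hint : ((k : ℂ) - j) = (((k : Fin n).val : ℤ) - ((j : Fin n).val : ℤ) : ℤ) := by
    push_cast; ring
  have hne1 : Complex.exp z ≠ 1 := by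
    intro h
    rw [Complex.exp_eq_one_iff] at h
    obtain ⟨m, hm⟩ := h
    rw [hz] at hm
    have h2 : (2 * Real.pi * Complex.I : ℂ) ≠ 0 := by
      simp [Real.pi_ne_zero, Complex.I_ne_zero]
    rw [div_eq_iff hn'] at hm
    have hm' : 2 * Real.pi * Complex.I * ((k : ℂ) - j)
        = 2 * Real.pi * Complex.I * ((m : ℂ) * n) := by linear_combination hm
    have : ((k : ℂ) - j) = m * n := mul_left_cancel₀ h2 hm'
    rw [hint] at this
    have hint2 : (((k : Fin n).val : ℤ) - ((j : Fin n).val : ℤ)) = m * n := by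
      exact_mod_cast this
    have hj := j.isLt
    have hk := k.isLt
    have hne : ((k : Fin n).val : ℤ) - ((j : Fin n).val : ℤ) ≠ 0 := by
      intro h0
      exact hjk (Fin.ext (by omega)).symm
    rcases lt_trichotomy m 0 with hm0 | hm0 | hm0
    · nlinarith [hint2, hj, hk, hm0]
    · simp [hm0] at hint2; exact hne hint2
    · nlinarith [hint2, hj, hk, hm0]
  have hzn : Complex.exp z ^ n = 1 := by
    rw [← Complex.exp_nat_mul, hz]
    have : (n : ℂ) * (2 * Real.pi * Complex.I * ((k : ℂ) - j) / n)
        = (((k : Fin n).val : ℤ) - ((j : Fin n).val : ℤ) : ℤ) * (2 * Real.pi * Complex.I) := by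
      rw [← hint]; field_simp
    rw [this, Complex.exp_int_mul_two_pi_mul_I]
  have step1 : ∑ m : Fin n, Complex.exp (2 * Real.pi * Complex.I * ((m : ℂ) * ((k : ℂ) - j)) / n)
      = ∑ m : Fin n, Complex.exp z ^ (m : ℕ) :=
    Finset.sum_congr rfl fun m _ => hterm m.val
  rw [step1, Fin.sum_univ_eq_sum_range (fun m => Complex.exp z ^ m) n,
    geom_sum_eq hne1 n, hzn, sub_self, zero_div]

lemma dftM_unitary (hn : 0 < n) : (dftM n)ᴴ * dftM n = 1 := by
  ext j k
  rw [Matrix.mul_apply]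
  simp only [Matrix.conjTranspose_apply]
  by_cases hjk : j = k
  · subst hjk
    have : ∀ m : Fin n, star (dftM n m j) * dftM n m j = 1 / n := by
      intro m
      rw [dftM_term hn]
      simp
    rw [Finset.sum_congr rfl fun m _ => this m, Matrix.one_apply_eq,
      Finset.sum_const, Finset.card_univ, Fintype.card_fin, nsmul_eq_mul, mul_one_div,
      div_self (Nat.cast_ne_zero.mpr hn.ne' : (n : ℂ) ≠ 0)]
  · have : ∀ m : Fin n, star (dftM n m j) * dftM n m k
        = Complex.exp (2 * Real.pi * Complex.I * ((m : ℂ) * ((k : ℂ) - j)) / n) / n := by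
      intro m; exact dftM_term hn m j k
    rw [Finset.sum_congr rfl fun m _ => this m, ← Finset.sum_div, dftM_sum_ne hn hjk,
      zero_div, Matrix.one_apply_ne hjk]

/-- zero-diagonal skew-Hermitian matrices are commutators of Hermitian matrices -/
lemma zero_diag_comm (M : Matrix (Fin n) (Fin n) ℂ) (hM : Mᴴ = -M)
    (hd : ∀ j, M j j = 0) :
    ∃ A B : Matrix (Fin n) (Fin n) ℂ, Aᴴ = A ∧ Bᴴ = B ∧ M = A * B - B * A := by
  refine ⟨Matrix.diagonal (fun j => ((j : Fin n).val : ℂ)),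
    Matrix.of (fun j k => if j = k then 0 else M j k / ((j.val : ℂ) - k.val)), ?_, ?_, ?_⟩
  · ext j k
    rw [Matrix.conjTranspose_apply, Matrix.diagonal_apply, Matrix.diagonal_apply]
    by_cases h : j = k
    · subst h; simp
    · rw [if_neg h, if_neg (Ne.symm h), star_zero]
  · ext j k
    rw [Matrix.conjTranspose_apply, Matrix.of_apply, Matrix.of_apply]
    by_cases hjk : j = k
    · subst hjk; simp
    · rw [if_neg (Ne.symm hjk), if_neg hjk]
      have hstar : star (M k j) = -M j k := by
        have := congrFun (congrFun hM j) k
        rw [Matrix.conjTranspose_apply] at this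
        rw [this]; simp
      rw [star_div₀, hstar]
      have : star (((k : Fin n).val : ℂ) - j.val) = ((k.val : ℂ) - j.val) := by
        simp
      rw [this]
      rw [neg_div, ← div_neg, neg_sub]
  · ext j k
    rw [Matrix.sub_apply, Matrix.diagonal_mul, Matrix.mul_diagonal, Matrix.of_apply]
    by_cases hjk : j = k
    · subst hjk; simp [hd j]
    · rw [if_neg hjk]
      have hne : ((j : Fin n).val : ℂ) - k.val ≠ 0 := by
        intro h
        apply hjk
        have : ((j : Fin n).val : ℂ) = k.val := by linear_combination h
        exact Fin.ext (Nat.cast_injective this)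
      field_simp

lemma conj_comm_lemma (W M : Matrix (Fin n) (Fin n) ℂ) (hW : Wᴴ * W = 1)
    (h : ∃ A B : Matrix (Fin n) (Fin n) ℂ, Aᴴ = A ∧ Bᴴ = B ∧ M = A * B - B * A) :
    ∃ A B : Matrix (Fin n) (Fin n) ℂ, Aᴴ = A ∧ Bᴴ = B ∧ W * M * Wᴴ = A * B - B * A := by
  obtain ⟨A, B, hA, hB, rfl⟩ := h
  have key : ∀ P Q : Matrix (Fin n) (Fin n) ℂ,
      (W * P * Wᴴ) * (W * Q * Wᴴ) = W * (P * Q) * Wᴴ := by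
    intro P Q
    calc (W * P * Wᴴ) * (W * Q * Wᴴ) = W * P * (Wᴴ * W) * Q * Wᴴ := by
          simp only [Matrix.mul_assoc]
      _ = W * (P * Q) * Wᴴ := by rw [hW, Matrix.mul_one]; simp only [Matrix.mul_assoc]
  refine ⟨W * A * Wᴴ, W * B * Wᴴ, ?_, ?_, ?_⟩
  · simp [Matrix.conjTranspose_mul, hA, Matrix.mul_assoc]
  · simp [Matrix.conjTranspose_mul, hB, Matrix.mul_assoc]
  · rw [key, key, Matrix.mul_sub, Matrix.sub_mul]

end AuxSu

/-- The set of commutators `[A,B]` of Hermitian `n × n` complex matrices equals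
`su(n)`, the set of traceless skew-Hermitian matrices. -/
theorem stmt_0 (n : ℕ) :
    {X : Matrix (Fin n) (Fin n) ℂ |
      ∃ A B : Matrix (Fin n) (Fin n) ℂ, Aᴴ = A ∧ Bᴴ = B ∧ X = A * B - B * A}
    = {X : Matrix (Fin n) (Fin n) ℂ | Xᴴ = -X ∧ X.trace = 0} := by
  ext X
  simp only [Set.mem_setOf_eq]
  constructor
  · rintro ⟨A, B, hA, hB, rfl⟩
    constructor
    · rw [Matrix.conjTranspose_sub, Matrix.conjTranspose_mul, Matrix.conjTranspose_mul, hA, hB,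
        neg_sub]
    · rw [Matrix.trace_sub, Matrix.trace_mul_comm, sub_self]
  · rintro ⟨hskew, htr⟩
    rcases Nat.eq_zero_or_pos n with hn | hn
    · subst hn
      exact ⟨0, 0, by ext j k; exact j.elim0, by ext j k; exact j.elim0,
        by ext j k; exact j.elim0⟩
    -- H = I • X is Hermitian
    have hH : (Complex.I • X).IsHermitian := by
      unfold Matrix.IsHermitian
      rw [Matrix.conjTranspose_smul, hskew]
      ext j k
      simp [Complex.star_def, Complex.conj_I]
    set U : Matrix (Fin n) (Fin n) ℂ := (hH.eigenvectorUnitary : Matrix (Fin n) (Fin n) ℂ) with hU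
    have hUU : Uᴴ * U = 1 := by
      have := (Matrix.mem_unitaryGroup_iff').mp hH.eigenvectorUnitary.2
      rwa [Matrix.star_eq_conjTranspose] at this
    set d : Fin n → ℂ := fun k => (-Complex.I) * (hH.eigenvalues k : ℂ) with hd
    have hXU : X = U * Matrix.diagonal d * Uᴴ := by
      have hX : X = (-Complex.I) • (Complex.I • X) := by
        rw [smul_smul]; simp
      calc X = (-Complex.I) • (U * Matrix.diagonal
            (RCLike.ofReal ∘ hH.eigenvalues) * Uᴴ) := by
            conv_lhs => rw [hX, hH.spectral_theorem]
            try rw [Matrix.star_eq_conjTranspose]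
            try rfl
        _ = U * Matrix.diagonal d * Uᴴ := by
            have hdiag : Matrix.diagonal d = (-Complex.I) •
                Matrix.diagonal (RCLike.ofReal ∘ hH.eigenvalues : Fin n → ℂ) := by
              rw [← Matrix.diagonal_smul]
              congr 1
              try funext k
              try simp [hd, Function.comp]
            rw [hdiag, Matrix.mul_smul, Matrix.smul_mul]
    have hdsum : ∑ k, d k = 0 := by
      have h1 : X.trace = ∑ k, d k := by
        rw [hXU, Matrix.trace_mul_cycle, hUU, Matrix.one_mul, Matrix.trace_diagonal]
      rw [← h1, htr]
    have hdstar : ∀ k, star (d k) = -d k := by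
      intro k
      simp [hd, Complex.conj_I, Complex.conj_ofReal]
    -- conjugate the diagonal by the DFT matrix
    set F := dftM n with hF
    have hFF : Fᴴ * F = 1 := dftM_unitary hn
    have hFF' : F * Fᴴ = 1 := mul_eq_one_comm.mp hFF
    set M : Matrix (Fin n) (Fin n) ℂ := Fᴴ * Matrix.diagonal d * F with hMdef
    have hMskew : Mᴴ = -M := by
      rw [hMdef, Matrix.conjTranspose_mul, Matrix.conjTranspose_mul,
        Matrix.conjTranspose_conjTranspose, Matrix.diagonal_conjTranspose]
      have hsd : Matrix.diagonal (star d) = -Matrix.diagonal d := by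
        rw [show star d = -d from funext hdstar]
        exact (Matrix.diagonal_neg d).symm
      rw [hsd, Matrix.neg_mul, Matrix.mul_neg, Matrix.mul_assoc]
    have hMdiag : ∀ j, M j j = 0 := by
      intro j
      rw [hMdef, Matrix.mul_apply]
      have : ∀ m : Fin n, (Fᴴ * Matrix.diagonal d) j m * F m j = d m / n := by
        intro m
        rw [Matrix.mul_diagonal, Matrix.conjTranspose_apply]
        have h1 := dftM_term hn m j j
        have h2 : ((j : ℂ) - (j : ℂ)) = 0 := sub_self _
        rw [h2] at h1
        simp only [mul_zero, zero_div, Complex.exp_zero] at h1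
        calc star (F m j) * d m * F m j = d m * (star (F m j) * F m j) := by ring
          _ = d m * (1 / (n : ℂ)) := by rw [h1]
          _ = d m / n := by ring
      rw [Finset.sum_congr rfl fun m _ => this m, ← Finset.sum_div, hdsum, zero_div]
    have hWU : (U * F)ᴴ * (U * F) = 1 := by
      rw [Matrix.conjTranspose_mul, Matrix.mul_assoc, ← Matrix.mul_assoc Uᴴ, hUU,
        Matrix.one_mul, hFF]
    have hXW : X = (U * F) * M * (U * F)ᴴ := by
      rw [hMdef, Matrix.conjTranspose_mul]
      calc X = U * Matrix.diagonal d * Uᴴ := hXU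
        _ = U * (F * Fᴴ) * Matrix.diagonal d * (F * Fᴴ) * Uᴴ := by
            rw [hFF', Matrix.mul_one, Matrix.mul_one]
        _ = U * F * (Fᴴ * Matrix.diagonal d * F) * (Fᴴ * Uᴴ) := by
            simp only [Matrix.mul_assoc]
    rw [hXW]
    exact conj_comm_lemma (U * F) M hWU (zero_diag_comm M hMskew hMdiag)
end

section
/- For f(U) = tr(H U ψ₀ U†) defined on the unitary group U(N), with H an orthogonal projector and ψ₀ a rank-one projector, the commutator [H, Uψ₀U†] vanishes if and only if f(U) ∈ {0,1}; in this case U is a global minimizer (value 0) or global maximizer (value 1) of f over U(N). -/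
open Matrix

section aux
variable {N : ℕ}

lemma mul_vmv (A : Matrix (Fin N) (Fin N) ℂ) (a b : Fin N → ℂ) :
    A * vecMulVec a b = vecMulVec (A *ᵥ a) b := by
  ext i j
  simp [Matrix.mul_apply, vecMulVec_apply, Matrix.mulVec, dotProduct, Finset.sum_mul, mul_assoc]

lemma vmv_mul (A : Matrix (Fin N) (Fin N) ℂ) (a b : Fin N → ℂ) :
    vecMulVec a b * A = vecMulVec a (b ᵥ* A) := by
  ext i j
  simp [Matrix.mul_apply, vecMulVec_apply, Matrix.vecMul, dotProduct, Finset.mul_sum, mul_assoc]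

lemma trace_vmv (a b : Fin N → ℂ) : (vecMulVec a b).trace = b ⬝ᵥ a := by
  simp [Matrix.trace, Matrix.diag, vecMulVec_apply, dotProduct, mul_comm]

lemma sds (v : Fin N → ℂ) : star v ⬝ᵥ v = ((∑ i, Complex.normSq (v i) : ℝ) : ℂ) := by
  simp [dotProduct, Complex.normSq_eq_conj_mul_self]

lemma vec_eq_zero (v : Fin N → ℂ) (h : star v ⬝ᵥ v = 0) : v = 0 := by
  have h2 : (∑ i, Complex.normSq (v i) : ℝ) = 0 := by
    have h3 := sds v; rw [h] at h3; exact_mod_cast h3.symm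
  funext i
  have h4 := (Finset.sum_eq_zero_iff_of_nonneg
      (fun i _ => Complex.normSq_nonneg (v i))).mp h2 i (Finset.mem_univ i)
  simpa using Complex.normSq_eq_zero.mp h4

lemma key (H : Matrix (Fin N) (Fin N) ℂ) (hH : Hᴴ = H) (hH2 : H * H = H)
    (ψ₀ : Fin N → ℂ) (hψ : star ψ₀ ⬝ᵥ ψ₀ = 1)
    (V : Matrix (Fin N) (Fin N) ℂ) (hV : V ∈ Matrix.unitaryGroup (Fin N) ℂ) :
    (H * (V * vecMulVec ψ₀ (star ψ₀) * Vᴴ)).trace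
        = ((∑ i, Complex.normSq ((H *ᵥ (V *ᵥ ψ₀)) i) : ℝ) : ℂ) ∧
    star ((V *ᵥ ψ₀) - H *ᵥ (V *ᵥ ψ₀)) ⬝ᵥ ((V *ᵥ ψ₀) - H *ᵥ (V *ᵥ ψ₀))
        = 1 - ((∑ i, Complex.normSq ((H *ᵥ (V *ᵥ ψ₀)) i) : ℝ) : ℂ) ∧
    ∑ i, Complex.normSq ((H *ᵥ (V *ᵥ ψ₀)) i) ≤ 1 := by
  set φ : Fin N → ℂ := V *ᵥ ψ₀ with hφdef
  set w : Fin N → ℂ := H *ᵥ φ with hwdef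
  set s : ℝ := ∑ i, Complex.normSq (w i) with hsdef
  have hVV : Vᴴ * V = 1 := by
    rw [← Matrix.star_eq_conjTranspose]; exact (Unitary.mem_iff.mp hV).1
  have hunit : star φ ⬝ᵥ φ = 1 := by
    rw [hφdef, star_mulVec, dotProduct_mulVec, vecMul_vecMul, hVV, vecMul_one, hψ]
  have hsw : star w = star φ ᵥ* H := by rw [hwdef, star_mulVec, hH]
  have hshift : star φ ⬝ᵥ w = star w ⬝ᵥ w := by
    conv_lhs => rw [hwdef, ← hH2, ← mulVec_mulVec, dotProduct_mulVec, ← hsw]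
  have hφw : star φ ⬝ᵥ w = (s : ℂ) := by rw [hshift, sds]
  have hwφ : star w ⬝ᵥ φ = (s : ℂ) := by
    rw [star_dotProduct, hφw]; simp
  have hww : star w ⬝ᵥ w = (s : ℂ) := by rw [sds]
  have htr : (H * (V * vecMulVec ψ₀ (star ψ₀) * Vᴴ)).trace = (s : ℂ) := by
    rw [mul_vmv, vmv_mul, ← star_mulVec, ← hφdef, mul_vmv, ← hwdef, trace_vmv, hφw]
  have hd : star (φ - w) ⬝ᵥ (φ - w) = 1 - (s : ℂ) := by
    rw [star_sub, sub_dotProduct, dotProduct_sub, dotProduct_sub, hunit, hφw, hwφ, hww]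
    ring
  refine ⟨htr, hd, ?_⟩
  have h0 : (0:ℝ) ≤ 1 - s := by
    have := sds (φ - w)
    rw [hd] at this
    have h3 : 1 - s = ∑ i, Complex.normSq ((φ - w) i) := by exact_mod_cast this
    rw [h3]
    exact Finset.sum_nonneg fun i _ => Complex.normSq_nonneg _
  linarith

end aux

/-- For `f(U) = tr(H U ψ₀ U†)` on the unitary group, with `H` a nontrivial orthogonal
projector and `ψ₀` a rank-one projector, `[H, Uψ₀U†] = 0` iff `f(U) ∈ {0,1}`; in this
case `U` is a global minimizer (value `0`) or a global maximizer (value `1`). -/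
theorem stmt_4 (N : ℕ) (H : Matrix (Fin N) (Fin N) ℂ)
    (hH : Hᴴ = H) (hH2 : H * H = H) (hH0 : H ≠ 0) (hH1 : H ≠ 1)
    (ψ₀ : Fin N → ℂ) (hψ : star ψ₀ ⬝ᵥ ψ₀ = 1)
    (f : Matrix (Fin N) (Fin N) ℂ → ℝ)
    (hf : ∀ V, f V = (H * (V * vecMulVec ψ₀ (star ψ₀) * Vᴴ)).trace.re)
    (U : Matrix (Fin N) (Fin N) ℂ) (hU : U ∈ Matrix.unitaryGroup (Fin N) ℂ) :
    (H * (U * vecMulVec ψ₀ (star ψ₀) * Uᴴ) - (U * vecMulVec ψ₀ (star ψ₀) * Uᴴ) * H = 0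
      ↔ f U = 0 ∨ f U = 1) ∧
    (f U = 0 → ∀ V ∈ Matrix.unitaryGroup (Fin N) ℂ, f U ≤ f V) ∧
    (f U = 1 → ∀ V ∈ Matrix.unitaryGroup (Fin N) ℂ, f V ≤ f U) := by
  obtain ⟨htr, hd, hle⟩ := key H hH hH2 ψ₀ hψ U hU
  set φ : Fin N → ℂ := U *ᵥ ψ₀ with hφdef
  set w : Fin N → ℂ := H *ᵥ φ with hwdef
  set s : ℝ := ∑ i, Complex.normSq (w i) with hsdef
  have hfU : f U = s := by rw [hf, htr, Complex.ofReal_re]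
  have hs0 : 0 ≤ s := Finset.sum_nonneg fun i _ => Complex.normSq_nonneg _
  -- unit norm of φ
  have hVV : Uᴴ * U = 1 := by
    rw [← Matrix.star_eq_conjTranspose]; exact (Unitary.mem_iff.mp hU).1
  have hunit : star φ ⬝ᵥ φ = 1 := by
    rw [hφdef, star_mulVec, dotProduct_mulVec, vecMul_vecMul, hVV, vecMul_one, hψ]
  have hsw : star w = star φ ᵥ* H := by rw [hwdef, star_mulVec, hH]
  -- commutator rewrite
  have hψU : U * vecMulVec ψ₀ (star ψ₀) * Uᴴ = vecMulVec φ (star φ) := by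
    rw [mul_vmv, vmv_mul, ← star_mulVec, ← hφdef]
  have hCeq : H * (U * vecMulVec ψ₀ (star ψ₀) * Uᴴ) - (U * vecMulVec ψ₀ (star ψ₀) * Uᴴ) * H
      = vecMulVec w (star φ) - vecMulVec φ (star w) := by
    rw [hψU, mul_vmv, vmv_mul, ← hwdef, ← hsw]
  constructor
  · rw [hCeq]
    constructor
    · -- commutator zero → f U ∈ {0,1}
      intro hC
      have hC' : ∀ i j, w i * star (φ j) = φ i * star (w j) := by
        intro i j
        have h := congrFun (congrFun hC i) j
        simpa [vecMulVec_apply, Matrix.sub_apply, sub_eq_zero] using h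
      have hφne : φ ≠ 0 := by
        intro h; rw [h] at hunit; simp at hunit
      obtain ⟨j₀, hj₀⟩ := Function.ne_iff.mp hφne
      have hj₀' : φ j₀ ≠ 0 := by simpa using hj₀
      have hsj₀ : star (φ j₀) ≠ 0 := star_ne_zero.mpr hj₀'
      set c : ℂ := star (w j₀) / star (φ j₀) with hcdef
      have hkey2 : c * star (φ j₀) = star (w j₀) := div_mul_cancel₀ _ hsj₀
      have hwφc : ∀ i, w i = c * φ i := by
        intro i
        have h := hC' i j₀
        have h2 : w i * star (φ j₀) = (c * φ i) * star (φ j₀) := by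
          rw [h, ← hkey2]; ring
        exact mul_right_cancel₀ hsj₀ h2
      have hHw : H *ᵥ w = w := by
        rw [hwdef, mulVec_mulVec, hH2]
      have hwc : H *ᵥ w = c • w := by
        have : w = c • φ := funext fun i => by simpa [smul_eq_mul] using hwφc i
        conv_lhs => rw [this]
        rw [mulVec_smul, ← hwdef]
      have hcc : c * (1 - c) * φ j₀ = 0 := by
        have h1 : w j₀ = c * w j₀ := by
          conv_lhs => rw [← hHw]
          rw [hwc]; simp [smul_eq_mul]
        have h2 : w j₀ = c * φ j₀ := hwφc j₀
        linear_combination h1 - h2 + c * h2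
      have hc01 : c = 0 ∨ c = 1 := by
        rcases mul_eq_zero.mp hcc with h | h
        · rcases mul_eq_zero.mp h with h' | h'
          · exact Or.inl h'
          · right; exact (sub_eq_zero.mp h').symm
        · exact absurd h hj₀'
      have htc : star φ ⬝ᵥ w = c := by
        have : w = c • φ := funext fun i => by simpa [smul_eq_mul] using hwφc i
        rw [this, dotProduct_smul, hunit, smul_eq_mul, mul_one]
      have hshift : star φ ⬝ᵥ w = star w ⬝ᵥ w := by
        conv_lhs => rw [hwdef, ← hH2, ← mulVec_mulVec, dotProduct_mulVec, ← hsw]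
      have hφw : star φ ⬝ᵥ w = (s : ℂ) := by rw [hshift, sds]
      have hsc : (s : ℂ) = c := by rw [← hφw, htc]
      rcases hc01 with h | h
      · left; rw [hfU]; exact_mod_cast hsc.trans h
      · right; rw [hfU]; exact_mod_cast hsc.trans h
    · -- f U ∈ {0,1} → commutator zero
      rintro (h0 | h1)
      · have hs : s = 0 := by rw [← hfU, h0]
        have hw0 : w = 0 := by
          apply vec_eq_zero
          have h3 := sds w
          rw [← hsdef, hs] at h3
          simpa using h3
        rw [hw0]
        ext i j
        simp [vecMulVec_apply, Matrix.sub_apply]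
      · have hs : s = 1 := by rw [← hfU, h1]
        have hd0 : star (φ - w) ⬝ᵥ (φ - w) = 0 := by
          rw [hd, hs]; simp
        have hsub : φ - w = 0 := vec_eq_zero _ hd0
        have hφw : φ = w := sub_eq_zero.mp hsub
        rw [hφw, sub_self]
  · constructor
    · intro h0 V hV
      obtain ⟨htrV, _, _⟩ := key H hH hH2 ψ₀ hψ V hV
      have : f V = ∑ i, Complex.normSq ((H *ᵥ (V *ᵥ ψ₀)) i) := by
        rw [hf, htrV, Complex.ofReal_re]
      rw [h0, this]
      exact Finset.sum_nonneg fun i _ => Complex.normSq_nonneg _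
    · intro h1 V hV
      obtain ⟨htrV, _, hleV⟩ := key H hH hH2 ψ₀ hψ V hV
      have : f V = ∑ i, Complex.normSq ((H *ᵥ (V *ᵥ ψ₀)) i) := by
        rw [hf, htrV, Complex.ofReal_re]
      rw [h1, this]
      exact hleV
end

section
/- Let H be an orthogonal projector, ψ₀ a rank-one projector, and let U be any finite product of matrices of the form exp(iθH) and exp(iθψ₀) (with arbitrary real θ's). Then the vector U|ψ₀⟩ lies in the subspace S = span_ℂ{|ψ₀⟩, H|ψ₀⟩}. -/
open Matrix

/-- Generators: matrices of the form `exp(iθH)` and `exp(iθP)` for real `θ`. -/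
def groverGens {N : ℕ} (H P : Matrix (Fin N) (Fin N) ℂ) :
    Set (Matrix (Fin N) (Fin N) ℂ) :=
  {V | ∃ θ : ℝ, V = NormedSpace.exp (((θ : ℂ) * Complex.I) • H) ∨
                V = NormedSpace.exp (((θ : ℂ) * Complex.I) • P)}

/-- `exp` of a scalar multiple of an idempotent matrix. -/
lemma exp_smul_idem {n : ℕ} (A : Matrix (Fin n) (Fin n) ℂ) (hA : A * A = A) (c : ℂ) :
    NormedSpace.exp (c • A) = 1 + (Complex.exp c - 1) • A := by
  have hpow : ∀ k : ℕ, A ^ (k + 1) = A := by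
    intro k
    induction k with
    | zero => simp
    | succ k ih => rw [pow_succ, ih, hA]
  have hc : HasSum (fun k : ℕ => (↑k.factorial : ℂ)⁻¹ • c ^ k) (Complex.exp c) := by
    rw [Complex.exp_eq_exp_ℂ]
    exact NormedSpace.exp_series_hasSum_exp' c
  have h1 : HasSum (fun k : ℕ => ((↑k.factorial : ℂ)⁻¹ • c ^ k) • A) (Complex.exp c • A) :=
    hc.smul_const A
  have h2 : HasSum (fun k : ℕ => if k = 0 then (1 - A : Matrix (Fin n) (Fin n) ℂ) else 0)
      (1 - A) := hasSum_ite_eq 0 (1 - A)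
  have h3 : HasSum (fun k : ℕ => (↑k.factorial : ℂ)⁻¹ • (c • A) ^ k)
      (Complex.exp c • A + (1 - A)) := by
    have heq : (fun k : ℕ => (↑k.factorial : ℂ)⁻¹ • (c • A) ^ k)
        = fun k : ℕ => ((↑k.factorial : ℂ)⁻¹ • c ^ k) • A
          + (if k = 0 then (1 - A : Matrix (Fin n) (Fin n) ℂ) else 0) := by
      funext k
      cases k with
      | zero => simp
      | succ k => simp [smul_pow, hpow k, smul_smul, mul_comm]
    rw [heq]
    exact h1.add h2
  rw [NormedSpace.exp_eq_tsum (𝕂 := ℂ)]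
  show (∑' k : ℕ, (↑k.factorial : ℂ)⁻¹ • (c • A) ^ k) = _
  rw [h3.tsum_eq, sub_smul, one_smul]
  abel

/-- If `U` is any finite product of matrices `exp(iθH)` and `exp(iθψ₀)`, then
`U|ψ₀⟩` lies in the Grover plane `S = span_ℂ{|ψ₀⟩, H|ψ₀⟩}`. -/
theorem stmt_7 (N : ℕ) (H : Matrix (Fin N) (Fin N) ℂ)
    (hH : Hᴴ = H) (hH2 : H * H = H)
    (ψ₀ : Fin N → ℂ) (hψ : star ψ₀ ⬝ᵥ ψ₀ = 1)
    (U : Matrix (Fin N) (Fin N) ℂ)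
    (hU : U ∈ Submonoid.closure (groverGens H (vecMulVec ψ₀ (star ψ₀)))) :
    U *ᵥ ψ₀ ∈ Submodule.span ℂ ({ψ₀, H *ᵥ ψ₀} : Set (Fin N → ℂ)) := by
  set P : Matrix (Fin N) (Fin N) ℂ := vecMulVec ψ₀ (star ψ₀) with hPdef
  set S : Submodule ℂ (Fin N → ℂ) := Submodule.span ℂ ({ψ₀, H *ᵥ ψ₀} : Set (Fin N → ℂ)) with hSdef
  have hψS : ψ₀ ∈ S := Submodule.subset_span (by simp)
  have hHψS : H *ᵥ ψ₀ ∈ S := Submodule.subset_span (by simp)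
  have hPvec : ∀ x : Fin N → ℂ, P *ᵥ x = (star ψ₀ ⬝ᵥ x) • ψ₀ := by
    intro x
    ext i
    simp only [hPdef, vecMulVec, mulVec, dotProduct, of_apply, Pi.smul_apply, smul_eq_mul]
    rw [Finset.sum_mul]
    exact Finset.sum_congr rfl fun k _ => by simp; ring
  -- H and P preserve S
  have hHinv : ∀ x ∈ S, H *ᵥ x ∈ S := by
    intro x hx
    induction hx using Submodule.span_induction with
    | mem y hy =>
      rcases hy with rfl | hy
      · exact hHψS
      · simp only [Set.mem_singleton_iff] at hy
        subst hy
        rw [Matrix.mulVec_mulVec, hH2]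
        exact hHψS
    | zero => simp
    | add y z _ _ hy hz => rw [Matrix.mulVec_add]; exact S.add_mem hy hz
    | smul a y _ hy => rw [Matrix.mulVec_smul]; exact S.smul_mem a hy
  have hPinv : ∀ x ∈ S, P *ᵥ x ∈ S := by
    intro x _
    rw [hPvec]
    exact S.smul_mem _ hψS
  -- generators preserve S
  have hgen : ∀ V ∈ groverGens H P, ∀ x ∈ S, V *ᵥ x ∈ S := by
    rintro V ⟨θ, hV | hV⟩ x hx
    · rw [hV, exp_smul_idem H hH2, Matrix.add_mulVec, Matrix.one_mulVec,
        Matrix.smul_mulVec]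
      exact S.add_mem hx (S.smul_mem _ (hHinv x hx))
    · have hP2 : P * P = P := by
        ext i j
        simp [hPdef, vecMulVec, Matrix.mul_apply, dotProduct, Finset.sum_mul, Finset.mul_sum]
        calc ∑ k, ψ₀ i * star (ψ₀ k) * (ψ₀ k * star (ψ₀ j))
            = ψ₀ i * star (ψ₀ j) * ∑ k, star (ψ₀ k) * ψ₀ k := by
              rw [Finset.mul_sum]; congr 1; ext k; ring
          _ = ψ₀ i * star (ψ₀ j) := by
              have : ∑ k, star (ψ₀ k) * ψ₀ k = 1 := hψ
              rw [this, mul_one]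
      rw [hV, exp_smul_idem P hP2, Matrix.add_mulVec, Matrix.one_mulVec,
        Matrix.smul_mulVec]
      exact S.add_mem hx (S.smul_mem _ (hPinv x hx))
  -- induction over the closure
  have key : ∀ x ∈ S, U *ᵥ x ∈ S := by
    induction hU using Submonoid.closure_induction with
    | mem V hV => exact hgen V hV
    | one => intro x hx; simpa using hx
    | mul a b _ _ ha hb =>
      intro x hx
      rw [← Matrix.mulVec_mulVec]
      exact ha _ (hb x hx)
  exact key ψ₀ hψS
end

section
/- Let H be an orthogonal projector, ψ₀ a rank-one projector, and set X₀ = [H,ψ₀], Y₀ = i[H,X₀]. If U is any finite product of matrices exp(iθH) and exp(iθψ₀) and ψ_U = Uψ₀U†, then the commutator [H, ψ_U] lies in the real linear span of {X₀, Y₀}. -/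
open Matrix

attribute [local instance] Matrix.linftyOpNormedRing Matrix.linftyOpNormedAlgebra

lemma exp_idem {N : ℕ} (M : Matrix (Fin N) (Fin N) ℂ) (hM : M * M = M) (s : ℂ) :
    NormedSpace.exp (s • M) = 1 + (Complex.exp s - 1) • M := by
  have hpow : ∀ n : ℕ, M ^ (n + 1) = M := by
    intro n; induction n with
    | zero => simp
    | succ k ih => rw [pow_succ, ih, hM]
  have hsum : Summable fun n : ℕ => ((n.factorial : ℂ)⁻¹ • (s • M) ^ n) :=
    NormedSpace.expSeries_summable' (𝕂 := ℂ) (s • M)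
  have hsum2 : Summable fun n : ℕ => ((n+1).factorial : ℂ)⁻¹ * s ^ (n+1) := by
    have := (NormedSpace.expSeries_summable' (𝕂 := ℂ) (𝔸 := ℂ) s).comp_injective
      (add_left_injective 1)
    simpa [smul_eq_mul, Function.comp_def] using this
  simp only [NormedSpace.exp_eq_tsum (𝕂 := ℂ)]
  rw [Summable.tsum_eq_zero_add hsum]
  simp only [pow_zero, Nat.factorial_zero, Nat.cast_one, inv_one, one_smul, smul_pow, hpow,
    smul_smul]
  congr 1
  rw [Summable.tsum_smul_const hsum2 M]
  congr 1
  have hexp : Complex.exp s = ∑' n : ℕ, (n.factorial : ℂ)⁻¹ * s ^ n := by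
    rw [Complex.exp_eq_exp_ℂ, NormedSpace.exp_eq_tsum (𝕂 := ℂ)]
    simp [smul_eq_mul]
  rw [hexp]
  conv_rhs => rw [Summable.tsum_eq_zero_add
    (by simpa [smul_eq_mul] using NormedSpace.expSeries_summable' (𝕂 := ℂ) (𝔸 := ℂ) s)]
  simp

lemma conj_expand {n : ℕ} (K M : Matrix (Fin n) (Fin n) ℂ) (z w : ℂ) :
    (1 + z • K) * M * (1 + w • K)
      = M + z • (K * M) + w • (M * K) + (z * w) • (K * (M * K)) := by
  simp only [add_mul, mul_add, one_mul, mul_one, smul_mul_assoc, mul_smul_comm, smul_smul,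
    smul_add, mul_assoc]
  module

/-- membership in the real span of `{HPH, P, HP+PH, i(HP-PH)}`. -/
def inSpan {N : ℕ} (H P M : Matrix (Fin N) (Fin N) ℂ) : Prop :=
  ∃ a b c d : ℝ, M = (a:ℂ) • (H * (P * H)) + (b:ℂ) • P + (c:ℂ) • (H * P + P * H)
    + (d:ℂ) • (Complex.I • (H * P - P * H))

lemma unit_facts (z : ℂ) (hunit : z * star z + z + star z = 0) :
    ∃ x y : ℝ, z = (x:ℂ) + (y:ℂ) * Complex.I ∧ star z = (x:ℂ) - (y:ℂ) * Complex.I ∧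
      (x:ℂ)^2 + (y:ℂ)^2 + 2*(x:ℂ) = 0 := by
  refine ⟨z.re, z.im, (Complex.re_add_im z).symm, ?_, ?_⟩
  · apply Complex.ext <;> simp
  · have m1 : z * star z = (z.re:ℂ)^2 + (z.im:ℂ)^2 := by
      rw [Complex.star_def, Complex.mul_conj, Complex.normSq_apply]
      push_cast; ring
    have m2 : z + star z = 2*(z.re:ℂ) := by
      rw [Complex.star_def, Complex.add_conj]
      push_cast; ring
    linear_combination hunit - m1 - m2

lemma conjH_mem {N : ℕ} {H P : Matrix (Fin N) (Fin N) ℂ} (hH2 : H * H = H)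
    (z : ℂ) (hunit : z * star z + z + star z = 0)
    {M : Matrix (Fin N) (Fin N) ℂ} (hM : inSpan H P M) :
    inSpan H P ((1 + z • H) * M * (1 + star z • H)) := by
  obtain ⟨x, y, hz, hw, hxy⟩ := unit_facts z hunit
  obtain ⟨a, b, c, d, hMrep⟩ := hM
  have pHA : H * (H * (P * H)) = H * (P * H) := by rw [← mul_assoc, hH2]
  have pAH : (H * (P * H)) * H = H * (P * H) := by
    rw [mul_assoc H (P*H) H, mul_assoc P H H, hH2]
  have pHHP : H * (H * P) = H * P := by rw [← mul_assoc, hH2]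
  have pPHH : (P * H) * H = P * H := by rw [mul_assoc, hH2]
  have pHPH : (H * P) * H = H * (P * H) := mul_assoc H P H
  -- conjugation of basis elements
  have c1 : (1 + z • H) * (H * (P * H)) * (1 + star z • H) = H * (P * H) := by
    rw [conj_expand, pHA, pAH, pHA, hw, hz]
    match_scalars <;>
      first
        | ring1
        | linear_combination hxy - (y:ℂ)^2 * Complex.I_sq
        | linear_combination hxy + (y:ℂ)^2 * Complex.I_sq
        | linear_combination -1*hxy - (y:ℂ)^2 * Complex.I_sq
        | linear_combination -1*hxy + (y:ℂ)^2 * Complex.I_sq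
  have c2 : (1 + z • H) * P * (1 + star z • H)
      = ((x^2+y^2 : ℝ) : ℂ) • (H * (P * H)) + P + (x:ℂ) • (H * P + P * H)
        + (y:ℂ) • (Complex.I • (H * P - P * H)) := by
    rw [conj_expand, hw, hz]
    match_scalars <;>
      first
        | ring1
        | linear_combination (-(y:ℂ)^2) * Complex.I_sq
        | linear_combination ((y:ℂ)^2) * Complex.I_sq
  have c3 : (1 + z • H) * (H * P + P * H) * (1 + star z • H)
      = ((x^2+y^2 : ℝ) : ℂ) • (H * (P * H)) + ((1+x : ℝ):ℂ) • (H * P + P * H)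
        + (y:ℂ) • (Complex.I • (H * P - P * H)) := by
    have q1 : H * (H * P + P * H) = H * P + H * (P * H) := by
      rw [mul_add, pHHP]
    have q2 : (H * P + P * H) * H = H * (P * H) + P * H := by
      rw [add_mul, pPHH, pHPH]
    have q3 : H * (H * (P * H) + P * H) = H * (P * H) + H * (P * H) := by
      rw [mul_add, pHA]
    rw [conj_expand, q1, q2, q3, hw, hz]
    match_scalars <;>
      first
        | ring1
        | linear_combination hxy - 2*(y:ℂ)^2 * Complex.I_sq
        | linear_combination hxy + 2*(y:ℂ)^2 * Complex.I_sq
        | linear_combination hxy - (y:ℂ)^2 * Complex.I_sq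
        | linear_combination hxy + (y:ℂ)^2 * Complex.I_sq
        | linear_combination (-(y:ℂ)^2) * Complex.I_sq
        | linear_combination ((y:ℂ)^2) * Complex.I_sq
  have c4 : (1 + z • H) * (Complex.I • (H * P - P * H)) * (1 + star z • H)
      = ((2*y : ℝ) : ℂ) • (H * (P * H)) + ((-y : ℝ):ℂ) • (H * P + P * H)
        + ((1+x : ℝ):ℂ) • (Complex.I • (H * P - P * H)) := by
    have r1 : H * (Complex.I • (H * P - P * H)) = Complex.I • (H * P - H * (P * H)) := by
      rw [mul_smul_comm, mul_sub, pHHP]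
    have r2 : (Complex.I • (H * P - P * H)) * H = Complex.I • (H * (P * H) - P * H) := by
      rw [smul_mul_assoc, sub_mul, pPHH, pHPH]
    have r3 : H * (Complex.I • (H * (P * H) - P * H)) = 0 := by
      rw [mul_smul_comm, mul_sub, pHA, sub_self, smul_zero]
    rw [conj_expand, r1, r2, r3, hw, hz]
    match_scalars <;>
      first
        | ring1
        | linear_combination 2*(y:ℂ) * Complex.I_sq
        | linear_combination (-2*(y:ℂ)) * Complex.I_sq
        | linear_combination (y:ℂ) * Complex.I_sq
        | linear_combination (-(y:ℂ)) * Complex.I_sq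
  have hdist : (1 + z • H) * M * (1 + star z • H)
      = (a:ℂ) • ((1 + z • H) * (H * (P * H)) * (1 + star z • H))
        + (b:ℂ) • ((1 + z • H) * P * (1 + star z • H))
        + (c:ℂ) • ((1 + z • H) * (H * P + P * H) * (1 + star z • H))
        + (d:ℂ) • ((1 + z • H) * (Complex.I • (H * P - P * H)) * (1 + star z • H)) := by
    rw [hMrep]
    simp only [mul_add, add_mul, mul_smul_comm, smul_mul_assoc]
    module
  refine ⟨a + b*(x^2+y^2) + c*(x^2+y^2) + d*(2*y), b, b*x + c*(1+x) + d*(-y),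
    b*y + c*y + d*(1+x), ?_⟩
  rw [hdist, c1, c2, c3, c4]
  push_cast
  module

lemma conjP_mem {N : ℕ} {H P : Matrix (Fin N) (Fin N) ℂ} (hPP : P * P = P)
    (cr : ℝ) (hPHP : P * H * P = (cr:ℂ) • P)
    (z : ℂ) (hunit : z * star z + z + star z = 0)
    {M : Matrix (Fin N) (Fin N) ℂ} (hM : inSpan H P M) :
    inSpan H P ((1 + z • P) * M * (1 + star z • P)) := by
  obtain ⟨x, y, hz, hw, hxy⟩ := unit_facts z hunit
  obtain ⟨a, b, c, d, hMrep⟩ := hM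
  have s1 : P * (H * (P * H)) = (cr:ℂ) • (P * H) := by
    rw [← mul_assoc, ← mul_assoc, hPHP, smul_mul_assoc]
  have s2 : (H * (P * H)) * P = (cr:ℂ) • (H * P) := by
    rw [mul_assoc H (P*H) P, mul_assoc P H P, ← mul_assoc P H P, hPHP, mul_smul_comm]
  have pPHP : P * (H * P) = (cr:ℂ) • P := by rw [← mul_assoc, hPHP]
  have s3 : P * ((cr:ℂ) • (H * P)) = ((cr:ℂ)*(cr:ℂ)) • P := by
    rw [mul_smul_comm, pPHP, smul_smul]
  have pPPH : P * (P * H) = P * H := by rw [← mul_assoc, hPP]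
  have pHPP : (H * P) * P = H * P := by rw [mul_assoc, hPP]
  have c1 : (1 + z • P) * (H * (P * H)) * (1 + star z • P)
      = H * (P * H) + ((cr^2*(x^2+y^2) : ℝ):ℂ) • P + ((cr*x : ℝ):ℂ) • (H * P + P * H)
        + ((-(cr*y) : ℝ):ℂ) • (Complex.I • (H * P - P * H)) := by
    rw [conj_expand, s1, s2, s3, hw, hz]
    match_scalars <;>
      first
        | ring1
        | linear_combination (-(cr:ℂ)^2*(y:ℂ)^2) * Complex.I_sq
        | linear_combination ((cr:ℂ)^2*(y:ℂ)^2) * Complex.I_sq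
  have c2 : (1 + z • P) * P * (1 + star z • P) = P := by
    rw [conj_expand, hPP, hPP, hw, hz]
    match_scalars <;>
      first
        | ring1
        | linear_combination hxy - (y:ℂ)^2 * Complex.I_sq
        | linear_combination hxy + (y:ℂ)^2 * Complex.I_sq
        | linear_combination -1*hxy - (y:ℂ)^2 * Complex.I_sq
        | linear_combination -1*hxy + (y:ℂ)^2 * Complex.I_sq
  have c3 : (1 + z • P) * (H * P + P * H) * (1 + star z • P)
      = ((cr*(x^2+y^2) : ℝ):ℂ) • P + ((1+x : ℝ):ℂ) • (H * P + P * H)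
        + ((-y : ℝ):ℂ) • (Complex.I • (H * P - P * H)) := by
    have t1 : P * (H * P + P * H) = (cr:ℂ) • P + P * H := by
      rw [mul_add, pPHP, pPPH]
    have t2 : (H * P + P * H) * P = H * P + (cr:ℂ) • P := by
      rw [add_mul, pHPP, hPHP]
    have t3 : P * (H * P + (cr:ℂ) • P) = (cr:ℂ) • P + (cr:ℂ) • P := by
      rw [mul_add, pPHP, mul_smul_comm, hPP]
    rw [conj_expand, t1, t2, t3, hw, hz]
    match_scalars <;>
      first
        | ring1
        | linear_combination (cr:ℂ)*hxy - 2*(cr:ℂ)*(y:ℂ)^2 * Complex.I_sq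
        | linear_combination (cr:ℂ)*hxy + 2*(cr:ℂ)*(y:ℂ)^2 * Complex.I_sq
        | linear_combination (cr:ℂ)*hxy - (cr:ℂ)*(y:ℂ)^2 * Complex.I_sq
        | linear_combination (cr:ℂ)*hxy + (cr:ℂ)*(y:ℂ)^2 * Complex.I_sq
        | linear_combination (-(cr:ℂ)*(y:ℂ)^2) * Complex.I_sq
        | linear_combination ((cr:ℂ)*(y:ℂ)^2) * Complex.I_sq
  have c4 : (1 + z • P) * (Complex.I • (H * P - P * H)) * (1 + star z • P)
      = ((-(2*cr*y) : ℝ):ℂ) • P + ((y : ℝ):ℂ) • (H * P + P * H)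
        + ((1+x : ℝ):ℂ) • (Complex.I • (H * P - P * H)) := by
    have u1 : P * (Complex.I • (H * P - P * H)) = Complex.I • ((cr:ℂ) • P - P * H) := by
      rw [mul_smul_comm, mul_sub, pPHP, pPPH]
    have u2 : (Complex.I • (H * P - P * H)) * P = Complex.I • (H * P - (cr:ℂ) • P) := by
      rw [smul_mul_assoc, sub_mul, pHPP, hPHP]
    have u3 : P * (Complex.I • (H * P - (cr:ℂ) • P)) = 0 := by
      rw [mul_smul_comm, mul_sub, pPHP, mul_smul_comm, hPP, sub_self, smul_zero]
    rw [conj_expand, u1, u2, u3, hw, hz]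
    match_scalars <;>
      first
        | ring1
        | linear_combination 2*(cr:ℂ)*(y:ℂ) * Complex.I_sq
        | linear_combination (-2*(cr:ℂ)*(y:ℂ)) * Complex.I_sq
        | linear_combination (y:ℂ) * Complex.I_sq
        | linear_combination (-(y:ℂ)) * Complex.I_sq
  have hdist : (1 + z • P) * M * (1 + star z • P)
      = (a:ℂ) • ((1 + z • P) * (H * (P * H)) * (1 + star z • P))
        + (b:ℂ) • ((1 + z • P) * P * (1 + star z • P))
        + (c:ℂ) • ((1 + z • P) * (H * P + P * H) * (1 + star z • P))
        + (d:ℂ) • ((1 + z • P) * (Complex.I • (H * P - P * H)) * (1 + star z • P)) := by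
    rw [hMrep]
    simp only [mul_add, add_mul, mul_smul_comm, smul_mul_assoc]
    module
  refine ⟨a, a*(cr^2*(x^2+y^2)) + b + c*(cr*(x^2+y^2)) + d*(-(2*cr*y)),
    a*(cr*x) + c*(1+x) + d*y, a*(-(cr*y)) + c*(-y) + d*(1+x), ?_⟩
  rw [hdist, c1, c2, c3, c4]
  push_cast
  module

/-- With `X₀ = [H,ψ₀]`, `Y₀ = i[H,X₀]`, for any finite product `U` of matrices
`exp(iθH)` and `exp(iθψ₀)` and `ψ_U = Uψ₀U†`, the commutator `[H, ψ_U]` lies in the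
real span of `{X₀, Y₀}`. -/
theorem stmt_8 (N : ℕ) (H : Matrix (Fin N) (Fin N) ℂ)
    (hH : Hᴴ = H) (hH2 : H * H = H)
    (ψ₀ : Fin N → ℂ) (hψ : star ψ₀ ⬝ᵥ ψ₀ = 1)
    (P X₀ Y₀ : Matrix (Fin N) (Fin N) ℂ)
    (hP : P = vecMulVec ψ₀ (star ψ₀))
    (hX : X₀ = H * P - P * H)
    (hY : Y₀ = Complex.I • (H * X₀ - X₀ * H))
    (U : Matrix (Fin N) (Fin N) ℂ)
    (hU : U ∈ Submonoid.closure (groverGens H P)) :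
    ∃ x y : ℝ, H * (U * P * Uᴴ) - (U * P * Uᴴ) * H = x • X₀ + y • Y₀ := by
  classical
  have hψ' : ∑ k, star (ψ₀ k) * ψ₀ k = (1:ℂ) := by simpa [dotProduct] using hψ
  have hPP : P * P = P := by
    rw [hP]; ext i j
    simp only [mul_apply, vecMulVec_apply, Pi.star_apply]
    calc ∑ k, ψ₀ i * star (ψ₀ k) * (ψ₀ k * star (ψ₀ j))
        = (ψ₀ i * star (ψ₀ j)) * ∑ k, star (ψ₀ k) * ψ₀ k := by
          rw [Finset.mul_sum]; exact Finset.sum_congr rfl fun k _ => by ring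
      _ = ψ₀ i * star (ψ₀ j) := by rw [hψ', mul_one]
  have hPc : Pᴴ = P := by
    rw [hP]; ext i j
    simp only [conjTranspose_apply, vecMulVec_apply, Pi.star_apply, star_mul', star_star]
    ring
  have hHe : ∀ i j, star (H i j) = H j i := by
    intro i j
    have h3 := congrFun (congrFun hH j) i
    rw [conjTranspose_apply] at h3
    exact h3
  have hcCr : star (star ψ₀ ⬝ᵥ (H *ᵥ ψ₀)) = star ψ₀ ⬝ᵥ (H *ᵥ ψ₀) := by
    have expand : star ψ₀ ⬝ᵥ (H *ᵥ ψ₀) = ∑ i, ∑ j, star (ψ₀ i) * H i j * ψ₀ j := by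
      simp only [dotProduct, mulVec, Pi.star_apply, Finset.mul_sum]
      exact Finset.sum_congr rfl fun i _ => Finset.sum_congr rfl fun j _ => by ring
    rw [expand, star_sum]
    simp only [star_sum, star_mul', star_star]
    rw [Finset.sum_comm]
    refine Finset.sum_congr rfl fun i _ => Finset.sum_congr rfl fun j _ => ?_
    rw [hHe]
    ring
  set cr : ℝ := (star ψ₀ ⬝ᵥ (H *ᵥ ψ₀)).re with hcrdef
  have hcr : (cr : ℂ) = star ψ₀ ⬝ᵥ (H *ᵥ ψ₀) := by
    have him : (star ψ₀ ⬝ᵥ (H *ᵥ ψ₀)).im = 0 := by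
      have h2 := congrArg Complex.im hcCr
      simp only [Complex.star_def, Complex.conj_im] at h2
      linarith
    exact Complex.ext rfl (by simp [him])
  have hPHP : P * H * P = (cr:ℂ) • P := by
    rw [hcr, hP]; ext i j
    simp only [mul_apply, vecMulVec_apply, Pi.star_apply, Matrix.smul_apply, smul_eq_mul,
      dotProduct, mulVec]
    have e1 : ∀ l, (∑ k, ψ₀ i * star (ψ₀ k) * H k l) * (ψ₀ l * star (ψ₀ j))
        = ψ₀ i * star (ψ₀ j) * ∑ k, star (ψ₀ k) * H k l * ψ₀ l := by
      intro l; rw [Finset.sum_mul, Finset.mul_sum]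
      exact Finset.sum_congr rfl fun k _ => by ring
    rw [Finset.sum_congr rfl fun l _ => e1 l, ← Finset.mul_sum]
    have e2 : (∑ k, star (ψ₀ k) * ∑ l, H k l * ψ₀ l)
        = ∑ l, ∑ k, star (ψ₀ k) * H k l * ψ₀ l := by
      rw [Finset.sum_comm]
      refine Finset.sum_congr rfl fun k _ => ?_
      rw [Finset.mul_sum]
      exact Finset.sum_congr rfl fun l _ => by ring
    rw [e2]
    ring
  -- main invariance
  have main : ∀ V ∈ Submonoid.closure (groverGens H P),
      ∀ M, inSpan H P M → inSpan H P (V * M * Vᴴ) := by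
    intro V hV
    induction hV using Submonoid.closure_induction with
    | one =>
      intro M hM
      simpa using hM
    | mul u v hu hv ihu ihv =>
      intro M hM
      have h2 := ihu _ (ihv M hM)
      have e : u * v * M * (u * v)ᴴ = u * (v * M * vᴴ) * uᴴ := by
        rw [conjTranspose_mul]
        simp only [mul_assoc]
      rw [e]
      exact h2
    | mem V hVmem =>
      intro M hM
      obtain ⟨θ, hcase⟩ := hVmem
      have hunit : (Complex.exp ((θ:ℂ) * Complex.I) - 1)
          * star (Complex.exp ((θ:ℂ) * Complex.I) - 1)
          + (Complex.exp ((θ:ℂ) * Complex.I) - 1)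
          + star (Complex.exp ((θ:ℂ) * Complex.I) - 1) = 0 := by
        have hE1 : Complex.exp ((θ:ℂ) * Complex.I)
            * star (Complex.exp ((θ:ℂ) * Complex.I)) = 1 := by
          rw [Complex.star_def, ← Complex.exp_conj, ← Complex.exp_add,
            show (starRingEnd ℂ) ((θ:ℂ) * Complex.I) = -((θ:ℂ) * Complex.I) by
              rw [_root_.map_mul, Complex.conj_ofReal, Complex.conj_I]; ring]
          simp
        rw [star_sub, star_one]
        linear_combination hE1
      rcases hcase with hV | hV
      · have hVc : Vᴴ = 1 + star (Complex.exp ((θ:ℂ) * Complex.I) - 1) • H := by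
          rw [hV, exp_idem H hH2, conjTranspose_add, conjTranspose_one, conjTranspose_smul, hH]
        rw [hVc, hV, exp_idem H hH2]
        exact conjH_mem hH2 _ hunit hM
      · have hVc : Vᴴ = 1 + star (Complex.exp ((θ:ℂ) * Complex.I) - 1) • P := by
          rw [hV, exp_idem P hPP, conjTranspose_add, conjTranspose_one, conjTranspose_smul, hPc]
        rw [hVc, hV, exp_idem P hPP]
        exact conjP_mem hPP cr hPHP _ hunit hM
  have hPmem : inSpan H P P := ⟨0, 1, 0, 0, by push_cast; module⟩
  obtain ⟨a, b, c, d, hrep⟩ := main U hU P hPmem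
  refine ⟨b + c, d, ?_⟩
  have hsm : ∀ (r : ℝ) (M : Matrix (Fin N) (Fin N) ℂ), r • M = (r:ℂ) • M := by
    intro r M; ext i j; simp [Complex.real_smul]
  rw [hsm, hsm, hrep, hY, hX]
  have eA1 : H * (H * (P * H)) = H * (P * H) := by rw [← mul_assoc, hH2]
  have eA2 : (H * (P * H)) * H = H * (P * H) := by
    rw [mul_assoc H (P*H) H, mul_assoc P H H, hH2]
  have eC1 : H * (H * P) = H * P := by rw [← mul_assoc, hH2]
  have eC2 : (P * H) * H = P * H := by rw [mul_assoc, hH2]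
  have eC3 : (H * P) * H = H * (P * H) := mul_assoc H P H
  simp only [mul_add, add_mul, mul_sub, sub_mul, mul_smul_comm, smul_mul_assoc, smul_sub,
    smul_add, eA1, eA2, eC1, eC2, eC3]
  push_cast
  module
end

section
/- Let H be an orthogonal projector, |ψ₀⟩ a unit vector with q₀ = ⟨ψ₀|H|ψ₀⟩ ∈ (0,1), and γ₀ = √(q₀(1-q₀)). Setting t* = arccos(√q₀)/γ₀ and ψ₀ = |ψ₀⟩⟨ψ₀|, the state |ψ⟩ = exp(t*[H,ψ₀])|ψ₀⟩ satisfies ⟨ψ|H|ψ⟩ = 1, i.e., a single exponential step reaches the global maximum value 1 of the objective. -/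
open Matrix

section Aux

variable {N : ℕ}

lemma vecMulVec_mulVec' (w v x : Fin N → ℂ) :
    vecMulVec w v *ᵥ x = (v ⬝ᵥ x) • w := by
  ext i
  simp [vecMulVec_apply, mulVec, dotProduct, Finset.mul_sum, mul_comm, mul_left_comm]

end Aux

/-- One-shot optimality of the exponential step: with `q₀ = ⟨ψ₀|H|ψ₀⟩ ∈ (0,1)`,
`γ₀ = √(q₀(1-q₀))` and `t* = arccos(√q₀)/γ₀`, the state
`|ψ⟩ = exp(t*[H,ψ₀])|ψ₀⟩` satisfies `⟨ψ|H|ψ⟩ = 1`. -/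
theorem stmt_10 (N : ℕ) (H : Matrix (Fin N) (Fin N) ℂ)
    (hH : Hᴴ = H) (hH2 : H * H = H)
    (ψ₀ : Fin N → ℂ) (hψ : star ψ₀ ⬝ᵥ ψ₀ = 1)
    (q₀ γ₀ tstar : ℝ)
    (hq : (q₀ : ℂ) = star ψ₀ ⬝ᵥ (H *ᵥ ψ₀)) (hq0 : 0 < q₀) (hq1 : q₀ < 1)
    (hγ : γ₀ = Real.sqrt (q₀ * (1 - q₀)))
    (ht : tstar = Real.arccos (Real.sqrt q₀) / γ₀)
    (ψ : Fin N → ℂ)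
    (hψdef : ψ = NormedSpace.exp (tstar •
        (H * vecMulVec ψ₀ (star ψ₀) - vecMulVec ψ₀ (star ψ₀) * H)) *ᵥ ψ₀) :
    star ψ ⬝ᵥ (H *ᵥ ψ) = 1 := by
  letI : SeminormedRing (Matrix (Fin N) (Fin N) ℂ) := Matrix.linftyOpSemiNormedRing
  letI : NormedRing (Matrix (Fin N) (Fin N) ℂ) := Matrix.linftyOpNormedRing
  letI : NormedAlgebra ℂ (Matrix (Fin N) (Fin N) ℂ) := Matrix.linftyOpNormedAlgebra
  -- basic real facts
  have hγpos : 0 < γ₀ := by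
    rw [hγ]
    exact Real.sqrt_pos.2 (by nlinarith)
  have hγ2 : γ₀ ^ 2 = q₀ * (1 - q₀) := by
    rw [hγ, sq, Real.mul_self_sqrt (by nlinarith)]
  -- notation
  set P : Matrix (Fin N) (Fin N) ℂ := vecMulVec ψ₀ (star ψ₀) with hP
  set A : Matrix (Fin N) (Fin N) ℂ := H * P - P * H with hA
  set u : Fin N → ℂ := H *ᵥ ψ₀ with hu
  have hPv : ∀ x, P *ᵥ x = (star ψ₀ ⬝ᵥ x) • ψ₀ := fun x => vecMulVec_mulVec' _ _ _
  have hq' : star ψ₀ ⬝ᵥ u = (q₀ : ℂ) := hq.symm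
  have hHu : H *ᵥ u = u := by
    rw [hu, mulVec_mulVec, hH2]
  -- v = A ψ₀
  set v : Fin N → ℂ := u - (q₀ : ℂ) • ψ₀ with hv
  have hAψ : A *ᵥ ψ₀ = v := by
    rw [hA, sub_mulVec, ← mulVec_mulVec, ← mulVec_mulVec, hPv, hψ, one_smul, hPv, ← hu, hq', hv]
  have hAu : A *ᵥ u = (q₀ : ℂ) • (u - ψ₀) := by
    rw [hA, sub_mulVec, ← mulVec_mulVec, ← mulVec_mulVec, hHu, hPv, hq', mulVec_smul, ← hu]
    module
  have hγc : ((γ₀ : ℂ)) ^ 2 = (q₀ : ℂ) * (1 - (q₀ : ℂ)) := by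
    have h := congrArg (Complex.ofReal) hγ2
    push_cast at h
    exact h
  have hAv : A *ᵥ v = (-(γ₀ : ℂ) ^ 2) • ψ₀ := by
    rw [hv, mulVec_sub, hAu, mulVec_smul, hAψ, hv, hγc]
    module
  -- powers of A applied to ψ₀
  have hstep : ∀ (n : ℕ) (x : Fin N → ℂ), A ^ (n + 1) *ᵥ x = A *ᵥ (A ^ n *ᵥ x) := by
    intro n x
    rw [pow_succ', mulVec_mulVec]
  have heo : ∀ k : ℕ, A ^ (2 * k) *ᵥ ψ₀ = ((-(γ₀ : ℂ) ^ 2) ^ k) • ψ₀ ∧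
      A ^ (2 * k + 1) *ᵥ ψ₀ = ((-(γ₀ : ℂ) ^ 2) ^ k) • v := by
    intro k
    induction k with
    | zero => simpa using hAψ
    | succ k ih =>
      have h1 : A ^ (2 * (k + 1)) *ᵥ ψ₀ = ((-(γ₀ : ℂ) ^ 2) ^ (k + 1)) • ψ₀ := by
        have : 2 * (k + 1) = (2 * k + 1) + 1 := by ring
        rw [this, hstep, ih.2, mulVec_smul, hAv, smul_smul]
        congr 1
      refine ⟨h1, ?_⟩
      rw [hstep, h1, mulVec_smul, hAψ]
  -- the exponential series applied to ψ₀
  have hts : tstar • A = ((tstar : ℂ)) • A := by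
    ext i j
    simp [Matrix.smul_apply, Complex.real_smul]
  set z : ℂ := ((γ₀ * tstar : ℝ) : ℂ) with hz
  set c : ℝ := Real.cos (γ₀ * tstar) with hc
  set s : ℝ := Real.sin (γ₀ * tstar) with hs
  -- linear map M ↦ M *ᵥ ψ₀ as a continuous linear map
  let L : Matrix (Fin N) (Fin N) ℂ →ₗ[ℂ] (Fin N → ℂ) :=
    { toFun := fun M => M *ᵥ ψ₀
      map_add' := fun M M' => add_mulVec M M' ψ₀
      map_smul' := fun r M => smul_mulVec r M ψ₀ }
  let Lc : Matrix (Fin N) (Fin N) ℂ →L[ℂ] (Fin N → ℂ) := LinearMap.toContinuousLinearMap L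
  have hsum : HasSum (fun n : ℕ => ((n.factorial : ℂ)⁻¹ * (tstar : ℂ) ^ n) • (A ^ n *ᵥ ψ₀)) ψ := by
    have h0 : HasSum (fun n : ℕ => ((n.factorial : ℂ))⁻¹ • ((tstar : ℂ) • A) ^ n)
        (NormedSpace.exp ((tstar : ℂ) • A)) := NormedSpace.exp_series_hasSum_exp' _
    have h1 := Lc.hasSum h0
    have h2 : ψ = Lc (NormedSpace.exp ((tstar : ℂ) • A)) := by
      rw [hψdef, hts]; rfl
    rw [← h2] at h1
    convert h1 using 2 with n
    show _ = Lc (((n.factorial : ℂ))⁻¹ • ((tstar : ℂ) • A) ^ n)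
    rw [_root_.map_smul, smul_pow, _root_.map_smul]
    show _ = ((n.factorial : ℂ))⁻¹ • (tstar:ℂ) ^ n • (A ^ n *ᵥ ψ₀)
    rw [smul_smul]
  -- closed form of the sum
  have htarget : HasSum (fun n : ℕ => ((n.factorial : ℂ)⁻¹ * (tstar : ℂ) ^ n) • (A ^ n *ᵥ ψ₀))
      (((c : ℝ) : ℂ) • ψ₀ + ((s / γ₀ : ℝ) : ℂ) • v) := by
    refine HasSum.even_add_odd ?_ ?_
    · have hcos := (Complex.hasSum_cos z).smul_const ψ₀
      have : Complex.cos z = ((c : ℝ) : ℂ) := by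
        rw [hz, hc, Complex.ofReal_cos]
      rw [this] at hcos
      convert hcos using 2 with k
      rw [(heo k).1, smul_smul]
      congr 1
      rw [hz]
      push_cast
      ring
    · have hsin := ((Complex.hasSum_sin z).div_const (γ₀ : ℂ)).smul_const v
      have : Complex.sin z / (γ₀ : ℂ) = ((s / γ₀ : ℝ) : ℂ) := by
        rw [hz, hs, Complex.ofReal_div, Complex.ofReal_sin]
      rw [this] at hsin
      convert hsin using 2 with k
      rw [(heo k).2, smul_smul]
      congr 1
      rw [hz]
      have hγne : ((γ₀ : ℝ) : ℂ) ≠ 0 := by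
        exact_mod_cast ne_of_gt hγpos
      have hfne : (((2 * k + 1).factorial : ℕ) : ℂ) ≠ 0 :=
        Nat.cast_ne_zero.2 (Nat.factorial_ne_zero _)
      push_cast
      field_simp [hγne, hfne]
      ring
  have hψeq : ψ = ((c : ℝ) : ℂ) • ψ₀ + ((s / γ₀ : ℝ) : ℂ) • v := hsum.unique htarget
  -- dot product facts
  have hsu : ∀ x : Fin N → ℂ, star u ⬝ᵥ x = star ψ₀ ⬝ᵥ (H *ᵥ x) := by
    intro x
    rw [hu, star_mulVec, hH, ← dotProduct_mulVec]
  have d3 : star u ⬝ᵥ ψ₀ = (q₀ : ℂ) := by rw [hsu, ← hu, hq']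
  have d4 : star u ⬝ᵥ u = (q₀ : ℂ) := by rw [hsu, hHu, hq']
  have hHv : H *ᵥ v = u - (q₀ : ℂ) • u := by
    rw [hv, mulVec_sub, mulVec_smul, hHu, ← hu]
  -- final computation
  have key : star ψ ⬝ᵥ (H *ᵥ ψ) =
      (((c : ℝ) : ℂ) + ((s / γ₀ : ℝ) : ℂ) * (1 - (q₀ : ℂ))) *
        ((q₀ : ℂ) * ((c : ℝ) : ℂ) + ((s / γ₀ : ℝ) : ℂ) * ((q₀ : ℂ) - (q₀ : ℂ) ^ 2)) := by
    rw [hψeq, mulVec_add, mulVec_smul, mulVec_smul, ← hu, hHv]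
    simp only [star_add, star_smul, star_sub, add_dotProduct, smul_dotProduct,
      dotProduct_add, dotProduct_smul, dotProduct_sub, sub_dotProduct, smul_eq_mul,
      Complex.star_def, Complex.conj_ofReal, map_ofNat, RingHom.map_one]
    rw [hv]
    simp only [star_sub, star_smul, sub_dotProduct, smul_dotProduct, smul_eq_mul,
      Complex.star_def, Complex.conj_ofReal]
    simp only [hq', d3, d4]
    ring
  rw [key]
  -- trig values
  have hγt : γ₀ * tstar = Real.arccos (Real.sqrt q₀) := by
    rw [ht]
    field_simp
  have hsq01 : Real.sqrt q₀ ≤ 1 := by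
    rw [show (1:ℝ) = Real.sqrt 1 by simp]
    exact Real.sqrt_le_sqrt (le_of_lt hq1)
  have hcval : c = Real.sqrt q₀ := by
    rw [hc, hγt, Real.cos_arccos (by linarith [Real.sqrt_nonneg q₀]) hsq01]
  have hsval : s = Real.sqrt (1 - q₀) := by
    rw [hs, hγt, Real.sin_arccos, Real.sq_sqrt hq0.le]
  -- reduce to a real identity
  have hreal : (c + (s / γ₀) * (1 - q₀)) * (q₀ * c + (s / γ₀) * (q₀ - q₀ ^ 2)) = 1 := by
    set a := Real.sqrt q₀ with hadef
    set b := Real.sqrt (1 - q₀) with hbdef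
    have ha2 : a ^ 2 = q₀ := Real.sq_sqrt hq0.le
    have hb2 : b ^ 2 = 1 - q₀ := Real.sq_sqrt (by linarith)
    have hapos : 0 < a := Real.sqrt_pos.2 hq0
    have hbpos : 0 < b := Real.sqrt_pos.2 (by linarith)
    have hγab : γ₀ = a * b := by
      rw [hγ, hadef, hbdef, ← Real.sqrt_mul hq0.le]
    have h1 : q₀ - q₀ ^ 2 = a ^ 2 * b ^ 2 := by rw [ha2, hb2]; ring
    have hab1 : a ^ 2 + b ^ 2 = 1 := by rw [ha2, hb2]; ring
    have hane : a ≠ 0 := ne_of_gt hapos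
    have hbne : b ≠ 0 := ne_of_gt hbpos
    rw [hcval, hsval, hγab, h1, ← hb2, ← ha2]
    field_simp
    linear_combination (a ^ 2 + b ^ 2 + 1) * hab1
  calc (((c : ℝ) : ℂ) + ((s / γ₀ : ℝ) : ℂ) * (1 - (q₀ : ℂ))) *
        ((q₀ : ℂ) * ((c : ℝ) : ℂ) + ((s / γ₀ : ℝ) : ℂ) * ((q₀ : ℂ) - (q₀ : ℂ) ^ 2))
      = (((c + (s / γ₀) * (1 - q₀)) * (q₀ * c + (s / γ₀) * (q₀ - q₀ ^ 2)) : ℝ) : ℂ) := by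
        push_cast; ring
    _ = 1 := by rw [hreal]; norm_num
end

section
/- Let H be an orthogonal projector, |ψ₀⟩ a unit vector with q = ⟨ψ₀|H|ψ₀⟩ ∈ (0,1), ψ₀ = |ψ₀⟩⟨ψ₀| and A = [H,ψ₀], γ = √(q(1-q)). Then on the invariant plane S = span{|ψ₀⟩, H|ψ₀⟩}, the operator A satisfies A² v = -γ² v for all v ∈ S; consequently exp(tA) restricted to S equals cos(γt)·I + (sin(γt)/γ)·A. -/
open Matrix
open scoped Nat

/-- On the invariant Grover plane `S = span{|ψ₀⟩, H|ψ₀⟩}`, the operator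
`A = [H,ψ₀]` satisfies `A²v = -γ²v`, and `exp(tA)` acts on `S` as
`cos(γt)·I + (sin(γt)/γ)·A`. -/
theorem stmt_11 (N : ℕ) (H : Matrix (Fin N) (Fin N) ℂ)
    (hH : Hᴴ = H) (hH2 : H * H = H)
    (ψ₀ : Fin N → ℂ) (hψ : star ψ₀ ⬝ᵥ ψ₀ = 1)
    (q γ : ℝ) (hq : (q : ℂ) = star ψ₀ ⬝ᵥ (H *ᵥ ψ₀)) (hq0 : 0 < q) (hq1 : q < 1)
    (hγ : γ = Real.sqrt (q * (1 - q)))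
    (A : Matrix (Fin N) (Fin N) ℂ)
    (hA : A = H * vecMulVec ψ₀ (star ψ₀) - vecMulVec ψ₀ (star ψ₀) * H) :
    (∀ v ∈ Submodule.span ℂ ({ψ₀, H *ᵥ ψ₀} : Set (Fin N → ℂ)),
        (A * A) *ᵥ v = (-(γ ^ 2)) • v) ∧
    (∀ t : ℝ, ∀ v ∈ Submodule.span ℂ ({ψ₀, H *ᵥ ψ₀} : Set (Fin N → ℂ)),
        NormedSpace.exp (t • A) *ᵥ v
          = Real.cos (γ * t) • v + (Real.sin (γ * t) / γ) • (A *ᵥ v)) := by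
  set u : Fin N → ℂ := H *ᵥ ψ₀ with hu
  set P : Matrix (Fin N) (Fin N) ℂ := vecMulVec ψ₀ (star ψ₀) with hP
  have hPv : ∀ w : Fin N → ℂ, P *ᵥ w = (star ψ₀ ⬝ᵥ w) • ψ₀ := by
    intro w; ext i
    simp [hP, vecMulVec_apply, mulVec, dotProduct, Finset.sum_mul, mul_comm, mul_left_comm,
      mul_assoc, Finset.mul_sum]
  have hHu : H *ᵥ u = u := by rw [hu, mulVec_mulVec, hH2]
  have hPψ : P *ᵥ ψ₀ = ψ₀ := by rw [hPv, hψ, one_smul]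
  have hPu : P *ᵥ u = (q : ℂ) • ψ₀ := by rw [hPv, ← hq]
  have hAψ : A *ᵥ ψ₀ = u - (q : ℂ) • ψ₀ := by
    rw [hA, sub_mulVec, ← mulVec_mulVec, ← mulVec_mulVec, hPψ, ← hu, hPu]
  have hAu : A *ᵥ u = (q : ℂ) • u - (q : ℂ) • ψ₀ := by
    rw [hA, sub_mulVec, ← mulVec_mulVec, ← mulVec_mulVec, hPu, hHu, hPu, mulVec_smul, ← hu]
  have hγ2 : γ ^ 2 = q * (1 - q) := by
    rw [hγ]; exact Real.sq_sqrt (by nlinarith)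
  have hcs : ∀ (r : ℝ) (w : Fin N → ℂ), r • w = (r : ℂ) • w := by
    intro r w; ext i; simp [Complex.real_smul]
  have hγq : ((-(γ ^ 2) : ℝ) : ℂ) = (q : ℂ) ^ 2 - q := by
    push_cast [hγ2]; ring
  have key : ∀ v ∈ Submodule.span ℂ ({ψ₀, H *ᵥ ψ₀} : Set (Fin N → ℂ)),
      (A * A) *ᵥ v = ((q : ℂ) ^ 2 - q) • v := by
    intro v hv
    induction hv using Submodule.span_induction with
    | mem x hx =>
        rcases hx with rfl | rfl
        · rw [← mulVec_mulVec, hAψ, mulVec_sub, mulVec_smul, hAψ, hAu]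
          module
        · rw [← mulVec_mulVec, ← hu, hAu, mulVec_sub, mulVec_smul, mulVec_smul, hAψ, hAu]
          module
    | zero => simp
    | add x y hx hy ihx ihy => rw [mulVec_add, ihx, ihy, smul_add]
    | smul a x hx ih => rw [mulVec_smul, ih, smul_comm]
  have hcγ : ((q : ℂ) ^ 2 - q) = -(γ : ℂ) ^ 2 := by
    rw [← hγq]; push_cast; ring
  refine ⟨fun v hv => by rw [key v hv, hcs, hγq], ?_⟩
  intro t v hv
  have hAAv : (A * A) *ᵥ v = (-(γ : ℂ) ^ 2) • v := by rw [key v hv, hcγ]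
  have hpow : ∀ k : ℕ, A ^ (2 * k) *ᵥ v = (-(γ : ℂ) ^ 2) ^ k • v ∧
      A ^ (2 * k + 1) *ᵥ v = (-(γ : ℂ) ^ 2) ^ k • (A *ᵥ v) := by
    intro k
    induction k with
    | zero => simp [Matrix.one_mulVec]
    | succ k ih =>
        obtain ⟨ihe, iho⟩ := ih
        have he : A ^ (2 * (k + 1)) *ᵥ v = (-(γ : ℂ) ^ 2) ^ (k + 1) • v := by
          have h2k : 2 * (k + 1) = (2 * k + 1) + 1 := by ring
          rw [h2k, pow_succ', ← mulVec_mulVec, iho, mulVec_smul, mulVec_mulVec, hAAv,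
            smul_smul, ← pow_succ]
        refine ⟨he, ?_⟩
        rw [pow_succ', ← mulVec_mulVec, he, mulVec_smul]
  have hγpos : 0 < γ := by rw [hγ]; exact Real.sqrt_pos.2 (by nlinarith)
  have hγC : (γ : ℂ) ≠ 0 := by exact_mod_cast hγpos.ne'
  letI : SeminormedRing (Matrix (Fin N) (Fin N) ℂ) := Matrix.linftyOpSemiNormedRing
  letI : NormedRing (Matrix (Fin N) (Fin N) ℂ) := Matrix.linftyOpNormedRing
  letI : NormedAlgebra ℂ (Matrix (Fin N) (Fin N) ℂ) := Matrix.linftyOpNormedAlgebra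
  have hexp : HasSum (fun n : ℕ => (n !⁻¹ : ℂ) • (t • A) ^ n) (NormedSpace.exp (t • A)) :=
    NormedSpace.exp_series_hasSum_exp' (t • A)
  let L : Matrix (Fin N) (Fin N) ℂ →ₗ[ℂ] (Fin N → ℂ) :=
    { toFun := fun M => M *ᵥ v
      map_add' := fun M₁ M₂ => Matrix.add_mulVec _ _ _
      map_smul' := fun c M => Matrix.smul_mulVec c M v }
  have h1 : HasSum (fun n : ℕ => (n !⁻¹ : ℂ) • ((t • A) ^ n *ᵥ v))
      (NormedSpace.exp (t • A) *ᵥ v) := by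
    have h := hexp.mapL (LinearMap.toContinuousLinearMap L)
    simpa [L, Matrix.smul_mulVec] using h
  have h2 : HasSum (fun n : ℕ => (n !⁻¹ : ℂ) • ((t • A) ^ n *ᵥ v))
      (Complex.cos ((γ : ℂ) * t) • v + (Complex.sin ((γ : ℂ) * t) / γ) • (A *ᵥ v)) := by
    refine HasSum.even_add_odd ?_ ?_
    · have hc := (Complex.hasSum_cos ((γ : ℂ) * t)).smul_const v
      convert hc using 2 with k
      rw [smul_pow, Matrix.smul_mulVec, (hpow k).1, hcs, smul_smul, smul_smul]
      congr 1
      have hf : ((2 * k)! : ℂ) ≠ 0 := by exact_mod_cast (Nat.factorial_pos _).ne'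
      push_cast
      rw [mul_pow, pow_mul, pow_mul]
      field_simp
      ring
    · have hs := ((Complex.hasSum_sin ((γ : ℂ) * t)).div_const (γ : ℂ)).smul_const (A *ᵥ v)
      convert hs using 2 with k
      rw [smul_pow, Matrix.smul_mulVec, (hpow k).2, hcs, smul_smul, smul_smul]
      congr 1
      have hf : ((2 * k + 1)! : ℂ) ≠ 0 := by exact_mod_cast (Nat.factorial_pos _).ne'
      push_cast
      rw [mul_pow, neg_pow, ← pow_mul]
      field_simp
      ring
  rw [h1.unique h2, hcs (Real.cos (γ * t)), hcs (Real.sin (γ * t) / γ)]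
  push_cast [Complex.ofReal_cos, Complex.ofReal_sin]
  ring_nf
end

section
/- Let H be the orthogonal projector onto an M-dimensional coordinate subspace of ℂ^N (1 ≤ M ≤ N-1), and let |ψ₀⟩ be the uniform superposition vector with all entries 1/√N. With ψ₀ = |ψ₀⟩⟨ψ₀|, X₀ = [H,ψ₀], Y₀ = i[H,X₀], the Frobenius norms satisfy ‖X₀‖_F = ‖Y₀‖_F = ‖[X₀,ψ₀]‖_F = √(2M(N-M))/N. -/
open Matrix

noncomputable def frobNorm {N : ℕ} (X : Matrix (Fin N) (Fin N) ℂ) : ℝ :=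
  Real.sqrt ((Xᴴ * X).trace.re)

lemma trace_re_eq {N : ℕ} (A : Matrix (Fin N) (Fin N) ℂ) :
    (Aᴴ * A).trace.re = ∑ i, ∑ j, Complex.normSq (A j i) := by
  simp only [Matrix.trace, Matrix.diag, Matrix.mul_apply, Matrix.conjTranspose_apply]
  rw [Complex.re_sum]
  refine Finset.sum_congr rfl fun i _ => ?_
  rw [Complex.re_sum]
  refine Finset.sum_congr rfl fun j _ => ?_
  rw [mul_comm]
  rw [show star (A j i) = (starRingEnd ℂ) (A j i) from rfl, Complex.mul_conj]
  simp

noncomputable def hh (M : ℕ) {N : ℕ} (i : Fin N) : ℝ := if (i : ℕ) < M then 1 else 0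

lemma sum_h (N M : ℕ) (hMN : M ≤ N) :
    ∑ i : Fin N, hh M i = M := by
  unfold hh
  rw [Fin.sum_univ_eq_sum_range (fun i => if i < M then (1:ℝ) else 0) N]
  rw [Finset.sum_boole]
  congr 1
  rw [show (Finset.range N).filter (· < M) = Finset.range M by ext x; simp; omega]
  simp

lemma big (N M : ℕ) (hMN : M ≤ N) (α β γ δ : ℝ) :
    ∑ i : Fin N, ∑ j : Fin N, (α * hh M i + β * hh M j + γ * (hh M i * hh M j) + δ)
      = α * M * N + β * M * N + γ * (M * M) + δ * N * N := by
  have hs := sum_h N M hMN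
  have inner : ∀ i : Fin N, ∑ j : Fin N,
      (α * hh M i + β * hh M j + γ * (hh M i * hh M j) + δ)
      = N * (α * hh M i) + β * M + γ * (hh M i * M) + N * δ := by
    intro i
    simp only [Finset.sum_add_distrib, ← Finset.mul_sum, Finset.sum_const,
      Finset.card_univ, Fintype.card_fin, hs, nsmul_eq_mul]
    ring
  rw [Finset.sum_congr rfl (fun i _ => inner i)]
  simp only [Finset.sum_add_distrib, ← Finset.mul_sum, Finset.sum_const,
    Finset.card_univ, Fintype.card_fin, hs, nsmul_eq_mul]
  rw [← Finset.sum_mul, hs]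
  ring

/-- For the rank-`M` coordinate projector `H` and the uniform superposition `|ψ₀⟩`,
with `X₀ = [H,ψ₀]`, `Y₀ = i[H,X₀]`, the Frobenius norms satisfy
`‖X₀‖_F = ‖Y₀‖_F = ‖[X₀,ψ₀]‖_F = √(2M(N-M))/N`. -/
theorem stmt_13 (N M : ℕ) (hN : 2 ≤ N) (hM1 : 1 ≤ M) (hM2 : M ≤ N - 1)
    (H : Matrix (Fin N) (Fin N) ℂ)
    (hHdef : H = Matrix.diagonal (fun i : Fin N => if (i : ℕ) < M then (1 : ℂ) else 0))
    (ψ₀ : Fin N → ℂ) (hψdef : ψ₀ = fun _ => (((Real.sqrt N)⁻¹ : ℝ) : ℂ))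
    (P X₀ Y₀ : Matrix (Fin N) (Fin N) ℂ)
    (hP : P = vecMulVec ψ₀ (star ψ₀))
    (hX : X₀ = H * P - P * H)
    (hY : Y₀ = Complex.I • (H * X₀ - X₀ * H)) :
    frobNorm X₀ = Real.sqrt (2 * M * ((N : ℝ) - M)) / N ∧
    frobNorm Y₀ = Real.sqrt (2 * M * ((N : ℝ) - M)) / N ∧
    frobNorm (X₀ * P - P * X₀) = Real.sqrt (2 * M * ((N : ℝ) - M)) / N := by
  have hMN : M ≤ N := by omega
  have hMltN : M < N := by omega
  have hNpos : (0:ℝ) < N := by positivity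
  have hNne : (N:ℝ) ≠ 0 := ne_of_gt hNpos
  have hsq : ∀ i : Fin N, hh M i * hh M i = hh M i := by
    intro i; unfold hh; split <;> norm_num
  -- H as diagonal of real indicator
  have hHd : H = Matrix.diagonal (fun i : Fin N => ((hh M i : ℝ) : ℂ)) := by
    rw [hHdef]
    ext i j
    by_cases h : (i:ℕ) < M <;> simp [Matrix.diagonal_apply, hh, h]
  -- entries of P
  have hPe : ∀ i j : Fin N, P i j = (((N:ℝ)⁻¹ : ℝ) : ℂ) := by
    intro i j
    rw [hP, hψdef]
    simp only [Matrix.vecMulVec_apply, Pi.star_apply, Complex.star_def, Complex.conj_ofReal]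
    rw [← Complex.ofReal_mul, ← mul_inv, Real.mul_self_sqrt (le_of_lt hNpos)]
  -- entries of X₀
  have hXe : ∀ i j : Fin N, X₀ i j = (((hh M i - hh M j) * (N:ℝ)⁻¹ : ℝ) : ℂ) := by
    intro i j
    rw [hX]
    simp only [Matrix.sub_apply, hHd, Matrix.diagonal_mul, Matrix.mul_diagonal, hPe]
    push_cast
    ring
  -- entries of Y₀
  have hYe : ∀ i j : Fin N, Y₀ i j = Complex.I * (((hh M i - hh M j)^2 * (N:ℝ)⁻¹ : ℝ) : ℂ) := by
    intro i j
    rw [hY]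
    simp only [Matrix.smul_apply, Matrix.sub_apply, hHd, Matrix.diagonal_mul,
      Matrix.mul_diagonal, hXe, smul_eq_mul]
    push_cast
    ring
  -- entries of the commutator [X₀, P]
  have hXPe : ∀ i j : Fin N, (X₀ * P) i j
      = ((((N:ℝ) * hh M i - M) * ((N:ℝ)^2)⁻¹ : ℝ) : ℂ) := by
    intro i j
    rw [Matrix.mul_apply]
    have e1 : ∀ k : Fin N, X₀ i k * P k j
        = (((hh M i - hh M k) * ((N:ℝ)⁻¹ * (N:ℝ)⁻¹) : ℝ) : ℂ) := by
      intro k; rw [hXe, hPe]; push_cast; ring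
    rw [Finset.sum_congr rfl (fun k _ => e1 k), ← Complex.ofReal_sum]
    congr 1
    rw [← Finset.sum_mul, Finset.sum_sub_distrib, Finset.sum_const, sum_h N M hMN]
    simp only [Finset.card_univ, Fintype.card_fin, nsmul_eq_mul]
    ring
  have hPXe : ∀ i j : Fin N, (P * X₀) i j
      = (((M - (N:ℝ) * hh M j) * ((N:ℝ)^2)⁻¹ : ℝ) : ℂ) := by
    intro i j
    rw [Matrix.mul_apply]
    have e1 : ∀ k : Fin N, P i k * X₀ k j
        = (((hh M k - hh M j) * ((N:ℝ)⁻¹ * (N:ℝ)⁻¹) : ℝ) : ℂ) := by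
      intro k; rw [hXe, hPe]; push_cast; ring
    rw [Finset.sum_congr rfl (fun k _ => e1 k), ← Complex.ofReal_sum]
    congr 1
    rw [← Finset.sum_mul, Finset.sum_sub_distrib, Finset.sum_const, sum_h N M hMN]
    simp only [Finset.card_univ, Fintype.card_fin, nsmul_eq_mul]
    ring
  have hZe : ∀ i j : Fin N, (X₀ * P - P * X₀) i j
      = ((((N:ℝ) * hh M i + (N:ℝ) * hh M j - 2*M) * ((N:ℝ)^2)⁻¹ : ℝ) : ℂ) := by
    intro i j
    rw [Matrix.sub_apply, hXPe, hPXe]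
    push_cast
    ring
  -- traces
  have tX : (X₀ᴴ * X₀).trace.re = 2*M*((N:ℝ)-M) * ((N:ℝ)^2)⁻¹ := by
    rw [trace_re_eq]
    have pt : ∀ i j : Fin N, Complex.normSq (X₀ j i)
        = (1 * hh M i + 1 * hh M j + (-2) * (hh M i * hh M j) + 0) * ((N:ℝ)^2)⁻¹ := by
      intro i j
      rw [hXe, Complex.normSq_ofReal]
      have hi := hsq i; have hj := hsq j
      field_simp
      nlinarith [hi, hj]
    calc ∑ i : Fin N, ∑ j : Fin N, Complex.normSq (X₀ j i)
        = ∑ i : Fin N, ∑ j : Fin N,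
            (1 * hh M i + 1 * hh M j + (-2) * (hh M i * hh M j) + 0) * ((N:ℝ)^2)⁻¹ := by
          exact Finset.sum_congr rfl fun i _ => Finset.sum_congr rfl fun j _ => pt i j
      _ = (∑ i : Fin N, ∑ j : Fin N,
            (1 * hh M i + 1 * hh M j + (-2) * (hh M i * hh M j) + 0)) * ((N:ℝ)^2)⁻¹ := by
          simp [← Finset.sum_mul]
      _ = 2*M*((N:ℝ)-M) * ((N:ℝ)^2)⁻¹ := by rw [big N M hMN]; ring
  have tY : (Y₀ᴴ * Y₀).trace.re = 2*M*((N:ℝ)-M) * ((N:ℝ)^2)⁻¹ := by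
    rw [trace_re_eq]
    have pt : ∀ i j : Fin N, Complex.normSq (Y₀ j i)
        = (1 * hh M i + 1 * hh M j + (-2) * (hh M i * hh M j) + 0) * ((N:ℝ)^2)⁻¹ := by
      intro i j
      rw [hYe, Complex.normSq_mul, Complex.normSq_I, one_mul, Complex.normSq_ofReal]
      unfold hh
      split_ifs <;> field_simp <;> ring
    calc ∑ i : Fin N, ∑ j : Fin N, Complex.normSq (Y₀ j i)
        = ∑ i : Fin N, ∑ j : Fin N,
            (1 * hh M i + 1 * hh M j + (-2) * (hh M i * hh M j) + 0) * ((N:ℝ)^2)⁻¹ := by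
          exact Finset.sum_congr rfl fun i _ => Finset.sum_congr rfl fun j _ => pt i j
      _ = (∑ i : Fin N, ∑ j : Fin N,
            (1 * hh M i + 1 * hh M j + (-2) * (hh M i * hh M j) + 0)) * ((N:ℝ)^2)⁻¹ := by
          simp [← Finset.sum_mul]
      _ = 2*M*((N:ℝ)-M) * ((N:ℝ)^2)⁻¹ := by rw [big N M hMN]; ring
  have tZ : ((X₀ * P - P * X₀)ᴴ * (X₀ * P - P * X₀)).trace.re
      = 2*M*((N:ℝ)-M) * ((N:ℝ)^2)⁻¹ := by
    rw [trace_re_eq]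
    have pt : ∀ i j : Fin N, Complex.normSq ((X₀ * P - P * X₀) j i)
        = (((N:ℝ)^2 - 4*M*N) * hh M i + ((N:ℝ)^2 - 4*M*N) * hh M j
            + (2*(N:ℝ)^2) * (hh M i * hh M j) + 4*M*M) * (((N:ℝ)^2)⁻¹ * ((N:ℝ)^2)⁻¹) := by
      intro i j
      rw [hZe, Complex.normSq_ofReal]
      have hi := hsq i; have hj := hsq j
      field_simp
      nlinarith [hi, hj]
    calc ∑ i : Fin N, ∑ j : Fin N, Complex.normSq ((X₀ * P - P * X₀) j i)
        = ∑ i : Fin N, ∑ j : Fin N,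
            (((N:ℝ)^2 - 4*M*N) * hh M i + ((N:ℝ)^2 - 4*M*N) * hh M j
              + (2*(N:ℝ)^2) * (hh M i * hh M j) + 4*M*M) * (((N:ℝ)^2)⁻¹ * ((N:ℝ)^2)⁻¹) := by
          exact Finset.sum_congr rfl fun i _ => Finset.sum_congr rfl fun j _ => pt i j
      _ = (∑ i : Fin N, ∑ j : Fin N,
            (((N:ℝ)^2 - 4*M*N) * hh M i + ((N:ℝ)^2 - 4*M*N) * hh M j
              + (2*(N:ℝ)^2) * (hh M i * hh M j) + 4*M*M)) * (((N:ℝ)^2)⁻¹ * ((N:ℝ)^2)⁻¹) := by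
          simp [← Finset.sum_mul]
      _ = 2*M*((N:ℝ)-M) * ((N:ℝ)^2)⁻¹ := by
          rw [big N M hMN]; field_simp; ring
  -- conclude
  have hfin : ∀ t : ℝ, t = 2*M*((N:ℝ)-M) * ((N:ℝ)^2)⁻¹ →
      Real.sqrt t = Real.sqrt (2 * M * ((N : ℝ) - M)) / N := by
    intro t ht
    rw [ht]
    have hnn : (0:ℝ) ≤ 2 * M * ((N:ℝ) - M) := by
      have : (M:ℝ) ≤ N := by exact_mod_cast hMN
      have h2 : (0:ℝ) ≤ (N:ℝ) - M := by linarith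
      positivity
    rw [show 2*(M:ℝ)*((N:ℝ)-M) * ((N:ℝ)^2)⁻¹ = 2*(M:ℝ)*((N:ℝ)-M) / (N:ℝ)^2 by ring]
    rw [Real.sqrt_div hnn, Real.sqrt_sq (le_of_lt hNpos)]
  exact ⟨hfin _ tX, hfin _ tY, hfin _ tZ⟩
end

section
/- Let H be an orthogonal projector and ψ₀ a rank-one projector with q₀ = tr(Hψ₀) ∈ (0,1). Set X₀ = [H,ψ₀] and Y₀ = i[H,X₀]. Then X₀ and Y₀ are ℝ-linearly independent, X₀ is skew-Hermitian, Y₀ is skew-Hermitian, and ⟨X₀,Y₀⟩ := Re tr(X₀† Y₀) = 0 (X₀ and Y₀ are orthogonal in the real Frobenius inner product). -/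
open Matrix

lemma aux_rankone {N : ℕ} (ψ : Fin N → ℂ) (M : Matrix (Fin N) (Fin N) ℂ) :
    vecMulVec ψ (star ψ) * M * vecMulVec ψ (star ψ)
      = (M * vecMulVec ψ (star ψ)).trace • vecMulVec ψ (star ψ) := by
  ext i j
  simp only [mul_apply, vecMulVec_apply, Matrix.smul_apply, trace, diag_apply, smul_eq_mul,
    Finset.sum_mul, Finset.mul_sum, Pi.star_apply]
  rw [Finset.sum_comm]
  exact Finset.sum_congr rfl fun k _ => Finset.sum_congr rfl fun l _ => by ring

lemma aux_idem {N : ℕ} (ψ : Fin N → ℂ) (hψ : star ψ ⬝ᵥ ψ = 1) :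
    vecMulVec ψ (star ψ) * vecMulVec ψ (star ψ) = vecMulVec ψ (star ψ) := by
  ext i j
  simp only [mul_apply, vecMulVec_apply, Pi.star_apply]
  have : ∑ k, ψ i * star (ψ k) * (ψ k * star (ψ j))
      = (ψ i * star (ψ j)) * ∑ k, star (ψ k) * ψ k := by
    rw [Finset.mul_sum]; exact Finset.sum_congr rfl fun k _ => by ring
  rw [this]
  have h1 : ∑ k, star (ψ k) * ψ k = 1 := hψ
  rw [h1, mul_one]

lemma aux_herm {N : ℕ} (ψ : Fin N → ℂ) :
    (vecMulVec ψ (star ψ))ᴴ = vecMulVec ψ (star ψ) := by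
  ext i j
  simp [conjTranspose_apply, vecMulVec_apply, mul_comm]

lemma aux_tr {N : ℕ} (ψ : Fin N → ℂ) (hψ : star ψ ⬝ᵥ ψ = 1) :
    (vecMulVec ψ (star ψ)).trace = 1 := by
  rw [← hψ]
  simp [trace, diag_apply, vecMulVec_apply, dotProduct, mul_comm]

/-- With `q₀ = tr(Hψ₀) ∈ (0,1)`, `X₀ = [H,ψ₀]` and `Y₀ = i[H,X₀]` are
ℝ-linearly independent skew-Hermitian matrices, orthogonal in the real Frobenius
inner product: `Re tr(X₀†Y₀) = 0`. -/
theorem stmt_14 (N : ℕ) (H : Matrix (Fin N) (Fin N) ℂ)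
    (hH : Hᴴ = H) (hH2 : H * H = H)
    (ψ₀ : Fin N → ℂ) (hψ : star ψ₀ ⬝ᵥ ψ₀ = 1)
    (q₀ : ℝ) (hq : (q₀ : ℂ) = (H * vecMulVec ψ₀ (star ψ₀)).trace)
    (hq0 : 0 < q₀) (hq1 : q₀ < 1)
    (P X₀ Y₀ : Matrix (Fin N) (Fin N) ℂ)
    (hP : P = vecMulVec ψ₀ (star ψ₀))
    (hX : X₀ = H * P - P * H)
    (hY : Y₀ = Complex.I • (H * X₀ - X₀ * H)) :
    LinearIndependent ℝ ![X₀, Y₀] ∧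
    X₀ᴴ = -X₀ ∧ Y₀ᴴ = -Y₀ ∧ ((X₀ᴴ * Y₀).trace).re = 0 := by
  -- basic facts about P
  have hP2 : P * P = P := by rw [hP]; exact aux_idem ψ₀ hψ
  have hPherm : Pᴴ = P := by rw [hP]; exact aux_herm ψ₀
  have hPtr : P.trace = 1 := by rw [hP]; exact aux_tr ψ₀ hψ
  have hq' : (H * P).trace = (q₀ : ℂ) := by rw [hP]; exact hq.symm
  have hPHP : P * H * P = (q₀ : ℂ) • P := by
    rw [hP, aux_rankone, ← hP, hq']
  -- skew-hermitian facts
  have hXs : X₀ᴴ = -X₀ := by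
    rw [hX]
    simp [conjTranspose_sub, conjTranspose_mul, hH, hPherm]
  have hYs : Y₀ᴴ = -Y₀ := by
    rw [hY]
    rw [conjTranspose_smul]
    simp [conjTranspose_sub, conjTranspose_mul, hH, hXs, Complex.star_def,
      Complex.conj_I, neg_smul, smul_sub, sub_eq_add_neg]
  -- trace facts
  have trPH : (P * H).trace = (q₀ : ℂ) := by rw [trace_mul_comm, hq']
  have trHPH : (H * P * H).trace = (q₀ : ℂ) := by
    rw [trace_mul_comm, ← mul_assoc, hH2, hq']
  -- trace of X₀ᴴ X₀
  have eX2 : X₀ * X₀ = H*((q₀:ℂ)•P) - H*P*H - (q₀:ℂ)•P + ((q₀:ℂ)•P)*H := by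
    rw [hX]
    have e : (H*P - P*H)*(H*P - P*H)
        = H*(P*H*P) - H*(P*P)*H - P*(H*H)*P + (P*H*P)*H := by noncomm_ring
    rw [e, hP2, hH2, hPHP]
  have tXX : (X₀ᴴ * X₀).trace = 2*(q₀:ℂ) - 2*(q₀:ℂ)^2 := by
    rw [hXs, neg_mul, trace_neg, eX2]
    simp only [trace_add, trace_sub, mul_smul_comm, smul_mul_assoc, trace_smul,
      smul_eq_mul, hq', trPH, trHPH, hPtr]
    ring
  -- the commutator C = [H, X₀]
  have hC : H * X₀ - X₀ * H = H*P + P*H - H*P*H - H*P*H := by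
    rw [hX]
    have e : H*(H*P - P*H) - (H*P - P*H)*H
        = (H*H)*P + P*(H*H) - H*P*H - H*P*H := by noncomm_ring
    rw [e, hH2]
  have eC2 : (H * X₀ - X₀ * H) * (H * X₀ - X₀ * H)
      = H*((q₀:ℂ)•P) + H*P*H + (q₀:ℂ)•P + ((q₀:ℂ)•P)*H
        - H*((q₀:ℂ)•P)*H - ((q₀:ℂ)•P)*H - H*((q₀:ℂ)•P) - H*((q₀:ℂ)•P)*H
        - H*((q₀:ℂ)•P)*H - ((q₀:ℂ)•P)*H - H*((q₀:ℂ)•P) - H*((q₀:ℂ)•P)*H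
        + H*((q₀:ℂ)•P)*H + H*((q₀:ℂ)•P)*H + H*((q₀:ℂ)•P)*H + H*((q₀:ℂ)•P)*H := by
    rw [hC]
    have e : (H*P + P*H - H*P*H - H*P*H) * (H*P + P*H - H*P*H - H*P*H)
        = H*(P*H*P) + H*(P*P)*H + P*(H*H)*P + (P*H*P)*H
          - H*(P*H*P)*H - P*(H*H)*P*H - H*(P*(H*H)*P) - H*(P*H*P)*H
          - H*(P*H*P)*H - P*(H*H)*P*H - H*(P*(H*H)*P) - H*(P*H*P)*H
          + H*(P*(H*H)*P)*H + H*(P*(H*H)*P)*H + H*(P*(H*H)*P)*H + H*(P*(H*H)*P)*H := by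
      noncomm_ring
    rw [e, hP2, hH2, hPHP]
  have hYY : Y₀ᴴ * Y₀ = (H * X₀ - X₀ * H) * (H * X₀ - X₀ * H) := by
    rw [hYs, hY]
    simp only [smul_smul, neg_smul, smul_mul_assoc, mul_smul_comm, neg_mul]
    rw [smul_neg, smul_smul, Complex.I_mul_I]
    simp
  have tYY : (Y₀ᴴ * Y₀).trace = 2*(q₀:ℂ) - 2*(q₀:ℂ)^2 := by
    rw [hYY, eC2]
    simp only [trace_add, trace_sub, mul_smul_comm, smul_mul_assoc, trace_smul,
      smul_eq_mul, hq', trPH, trHPH, hPtr]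
    ring
  -- orthogonality
  have tXY : (X₀ᴴ * Y₀).trace = 0 := by
    rw [hXs, hY, mul_smul_comm, trace_smul]
    have e : (-X₀) * (H * X₀ - X₀ * H) = X₀ * (X₀ * H) - X₀ * (H * X₀) := by
      noncomm_ring
    have h1 : (X₀ * (H * X₀)).trace = (X₀ * (X₀ * H)).trace := by
      simp only [← mul_assoc]
      rw [trace_mul_comm (X₀*H) X₀]
      simp only [← mul_assoc]
    rw [e, trace_sub, h1, sub_self, smul_zero]
  -- a nonzero constant
  have hcne : (2*(q₀:ℂ) - 2*(q₀:ℂ)^2) ≠ 0 := by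
    have h : ((2*q₀ - 2*q₀^2 : ℝ) : ℂ) = 2*(q₀:ℂ) - 2*(q₀:ℂ)^2 := by push_cast; ring
    rw [← h]
    exact Complex.ofReal_ne_zero.mpr (by nlinarith)
  refine ⟨?_, hXs, hYs, by rw [tXY]; simp⟩
  rw [LinearIndependent.pair_iff]
  intro s t hst
  have key : ∀ (A : Matrix (Fin N) (Fin N) ℂ),
      (s:ℂ) * (Aᴴ * X₀).trace + (t:ℂ) * (Aᴴ * Y₀).trace = 0 := by
    intro A
    have : Aᴴ * (s • X₀ + t • Y₀) = Aᴴ * (0 : Matrix (Fin N) (Fin N) ℂ) := by rw [hst]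
    rw [mul_add, mul_smul_comm, mul_smul_comm, mul_zero] at this
    have := congrArg Matrix.trace this
    rw [trace_add, trace_smul, trace_smul, trace_zero] at this
    simpa [Complex.real_smul] using this
  constructor
  · have h1 := key X₀
    rw [tXX, tXY, mul_zero, add_zero] at h1
    have : (s : ℂ) = 0 := by
      rcases mul_eq_zero.mp h1 with h | h
      · exact h
      · exact absurd h hcne
    exact_mod_cast this
  · have h2 := key Y₀
    have tYX : (Y₀ᴴ * X₀).trace = 0 := by
      have hct : (Y₀ᴴ * X₀)ᴴ = X₀ᴴ * Y₀ := by
        rw [conjTranspose_mul, conjTranspose_conjTranspose]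
      have h3 : (X₀ᴴ * Y₀).trace = star ((Y₀ᴴ * X₀).trace) := by
        rw [← hct, trace_conjTranspose]
      exact star_eq_zero.mp (h3.symm.trans tXY)
    rw [tYX, tYY, mul_zero, zero_add] at h2
    have : (t : ℂ) = 0 := by
      rcases mul_eq_zero.mp h2 with h | h
      · exact h
      · exact absurd h hcne
    exact_mod_cast this
end

section
/- Define the curve γ(t;x,y) = exp(i a₁ H) exp(i t b₁ ψ₀) exp(i(a₂-a₁)H) exp(i t b₂ ψ₀) exp(-i a₂ H) with a₁ = A + π/2, a₂ = A - π/2, b₁ = -R/2, b₂ = R/2, where A = atan2(y,x) and R = √(x²+y²). Then γ(0;x,y) = I, γ(t;x,y) is unitary for all t, and the derivative at t = 0 satisfies γ'(0;x,y) = x X₀ + y Y₀, where X₀ = [H,ψ₀] and Y₀ = i[H,X₀]. -/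
open Matrix Real

attribute [local instance] Matrix.linftyOpNormedAddCommGroup Matrix.linftyOpNormedSpace
attribute [local instance] Matrix.linftyOpNormedRing Matrix.linftyOpNormedAlgebra

set_option maxHeartbeats 1000000 in
lemma exp_of_idem {𝔸 : Type*} [NormedRing 𝔸] [NormedAlgebra ℂ 𝔸] [CompleteSpace 𝔸]
    (M : 𝔸) (hM : M * M = M) (c : ℂ) :
    NormedSpace.exp (c • M) = 1 + (Complex.exp c - 1) • M := by
  have hpow : ∀ n : ℕ, M ^ (n + 1) = M := by
    intro n; induction n with
    | zero => simp
    | succ n ih => rw [pow_succ, ih, hM]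
  have hscal : Complex.exp c - 1
      = ∑' n : ℕ, ((Nat.factorial (n+1) : ℂ)⁻¹ * c ^ (n+1)) := by
    have h : Complex.exp c = ∑' n : ℕ, (Nat.factorial n : ℂ)⁻¹ • c ^ n := by
      rw [congrFun Complex.exp_eq_exp_ℂ c, NormedSpace.exp_eq_tsum ℂ]
    have hs := NormedSpace.expSeries_summable' (𝕂 := ℂ) c
    rw [hs.tsum_eq_zero_add] at h
    simp only [pow_zero, Nat.factorial_zero, Nat.cast_one, inv_one, smul_eq_mul, mul_one] at h
    rw [h]; simp [smul_eq_mul]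
  have hmain : NormedSpace.exp (c • M) = ∑' n : ℕ, (Nat.factorial n : ℂ)⁻¹ • (c • M) ^ n := by
    rw [NormedSpace.exp_eq_tsum ℂ]
  rw [hmain]
  have hs := NormedSpace.expSeries_summable' (𝕂 := ℂ) (c • M)
  rw [hs.tsum_eq_zero_add]
  simp only [pow_zero, Nat.factorial_zero, Nat.cast_one, inv_one, one_smul, smul_pow, hpow,
    smul_smul]
  congr 1
  rw [hscal, Summable.tsum_smul_const ?_]
  have h2 : Summable fun n : ℕ => ((n.factorial : ℂ))⁻¹ * c ^ n := by
    simpa [smul_eq_mul] using NormedSpace.expSeries_summable' (𝕂 := ℂ) c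
  exact (summable_nat_add_iff 1).2 h2

lemma proj_mul {𝔸 : Type*} [Ring 𝔸] [Algebra ℂ 𝔸] (M : 𝔸) (hM : M * M = M) (α β : ℂ) :
    (1 + (α - 1) • M) * (1 + (β - 1) • M) = 1 + (α * β - 1) • M := by
  simp only [mul_add, add_mul, mul_one, one_mul, smul_mul_assoc, mul_smul_comm, smul_smul, hM]
  match_scalars <;> ring1

lemma proj_cancel {𝔸 : Type*} [Ring 𝔸] [Algebra ℂ 𝔸] (M : 𝔸) (hM : M * M = M) (a : ℝ) (X : 𝔸) :
    (1 + (Complex.exp (((-a : ℝ) : ℂ) * Complex.I) - 1) • M) *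
      ((1 + (Complex.exp ((a : ℂ) * Complex.I) - 1) • M) * X) = X := by
  rw [← mul_assoc, proj_mul M hM]
  have h : Complex.exp (((-a : ℝ) : ℂ) * Complex.I) * Complex.exp ((a : ℂ) * Complex.I) = 1 := by
    rw [← Complex.exp_add]
    have : (((-a : ℝ) : ℂ) * Complex.I + (a : ℂ) * Complex.I) = 0 := by push_cast; ring
    rw [this, Complex.exp_zero]
  rw [h]; simp

lemma five_expand {𝔸 : Type*} [Ring 𝔸] [Algebra ℂ 𝔸] (A B C M : 𝔸) (α β : ℂ)
    (hαβ : α * β = 1) :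
    A * (1 + (α - 1) • M) * B * (1 + (β - 1) • M) * C
    = (A*B*C - (A*(M*(B*C)) - A*(M*(B*(M*C)))) - (A*(B*(M*C)) - A*(M*(B*(M*C)))))
      + α • (A*(M*(B*C)) - A*(M*(B*(M*C)))) + β • (A*(B*(M*C)) - A*(M*(B*(M*C)))) := by
  simp only [mul_add, add_mul, mul_one, one_mul, smul_mul_assoc, mul_smul_comm, smul_smul,
    mul_assoc, smul_sub, smul_add]
  match_scalars <;> first | ring1 | linear_combination hαβ | linear_combination α * hαβ |
    linear_combination β * hαβ

set_option maxHeartbeats 1000000 in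
/-- The length-5 product curve `γ(t;x,y)` with Grover-compatible factors satisfies
`γ(0) = I`, is unitary for all `t`, and has initial velocity `x X₀ + y Y₀`. -/
theorem stmt_15 (N : ℕ) (H : Matrix (Fin N) (Fin N) ℂ)
    (hH : Hᴴ = H) (hH2 : H * H = H)
    (ψ₀ : Fin N → ℂ) (hψ : star ψ₀ ⬝ᵥ ψ₀ = 1)
    (P X₀ Y₀ : Matrix (Fin N) (Fin N) ℂ)
    (hP : P = vecMulVec ψ₀ (star ψ₀))
    (hX : X₀ = H * P - P * H)
    (hY : Y₀ = Complex.I • (H * X₀ - X₀ * H))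
    (x y : ℝ) (hxy : (x, y) ≠ (0, 0))
    (A R a₁ a₂ b₁ b₂ : ℝ)
    (hA : A = Complex.arg ((x : ℂ) + (y : ℂ) * Complex.I))
    (hR : R = Real.sqrt (x ^ 2 + y ^ 2))
    (ha₁ : a₁ = A + π / 2) (ha₂ : a₂ = A - π / 2)
    (hb₁ : b₁ = -R / 2) (hb₂ : b₂ = R / 2)
    (γ : ℝ → Matrix (Fin N) (Fin N) ℂ)
    (hγ : ∀ t : ℝ, γ t =
      NormedSpace.exp (((a₁ : ℂ) * Complex.I) • H) *
      NormedSpace.exp ((((t * b₁ : ℝ) : ℂ) * Complex.I) • P) *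
      NormedSpace.exp ((((a₂ - a₁ : ℝ) : ℂ) * Complex.I) • H) *
      NormedSpace.exp ((((t * b₂ : ℝ) : ℂ) * Complex.I) • P) *
      NormedSpace.exp ((-((a₂ : ℂ)) * Complex.I) • H)) :
    γ 0 = 1 ∧
    (∀ t : ℝ, (γ t)ᴴ * γ t = 1) ∧
    HasDerivAt γ (x • X₀ + y • Y₀) 0 := by
  have hPP : P * P = P := by
    subst hP
    have key : (∑ k, star (ψ₀ k) * ψ₀ k) = 1 := by
      simpa [dotProduct] using hψ
    ext i j
    simp only [mul_apply, vecMulVec_apply, Pi.star_apply]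
    rw [show (∑ k, ψ₀ i * star (ψ₀ k) * (ψ₀ k * star (ψ₀ j)))
        = (ψ₀ i * star (ψ₀ j)) * ∑ k, star (ψ₀ k) * ψ₀ k from by
      rw [Finset.mul_sum]; exact Finset.sum_congr rfl fun k _ => by ring]
    rw [key, mul_one]
  have hPherm : Pᴴ = P := by
    subst hP
    ext i j
    simp [conjTranspose_apply, vecMulVec_apply, mul_comm]
  -- rewrite γ in closed form
  have hcast : (-((a₂ : ℂ)) * Complex.I) = (((-a₂ : ℝ) : ℂ)) * Complex.I := by push_cast; ring
  have hγ5 : ∀ t : ℝ, γ t =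
      (1 + (Complex.exp ((a₁ : ℂ) * Complex.I) - 1) • H) *
      (1 + (Complex.exp (((t * b₁ : ℝ) : ℂ) * Complex.I) - 1) • P) *
      (1 + (Complex.exp (((a₂ - a₁ : ℝ) : ℂ) * Complex.I) - 1) • H) *
      (1 + (Complex.exp (((t * b₂ : ℝ) : ℂ) * Complex.I) - 1) • P) *
      (1 + (Complex.exp (((-a₂ : ℝ) : ℂ) * Complex.I) - 1) • H) := by
    intro t
    rw [hγ t, hcast]
    erw [exp_of_idem H hH2, exp_of_idem P hPP, exp_of_idem H hH2, exp_of_idem P hPP,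
      exp_of_idem H hH2]
  have hstarH : ∀ a : ℝ, ((1 : Matrix (Fin N) (Fin N) ℂ)
        + (Complex.exp ((a : ℂ) * Complex.I) - 1) • H)ᴴ
      = 1 + (Complex.exp (((-a : ℝ) : ℂ) * Complex.I) - 1) • H := by
    intro a
    have h1 : (starRingEnd ℂ) (Complex.exp ((a : ℂ) * Complex.I) - 1)
        = Complex.exp (((-a : ℝ) : ℂ) * Complex.I) - 1 := by
      rw [map_sub, _root_.map_one, ← Complex.exp_conj, _root_.map_mul, Complex.conj_ofReal,
        Complex.conj_I]
      rw [show (a : ℂ) * -Complex.I = ((-a : ℝ) : ℂ) * Complex.I from by push_cast; ring]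
    rw [conjTranspose_add, conjTranspose_one, conjTranspose_smul, hH, Complex.star_def, h1]
  have hstarP : ∀ a : ℝ, ((1 : Matrix (Fin N) (Fin N) ℂ)
        + (Complex.exp ((a : ℂ) * Complex.I) - 1) • P)ᴴ
      = 1 + (Complex.exp (((-a : ℝ) : ℂ) * Complex.I) - 1) • P := by
    intro a
    have h1 : (starRingEnd ℂ) (Complex.exp ((a : ℂ) * Complex.I) - 1)
        = Complex.exp (((-a : ℝ) : ℂ) * Complex.I) - 1 := by
      rw [map_sub, _root_.map_one, ← Complex.exp_conj, _root_.map_mul, Complex.conj_ofReal,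
        Complex.conj_I]
      rw [show (a : ℂ) * -Complex.I = ((-a : ℝ) : ℂ) * Complex.I from by push_cast; ring]
    rw [conjTranspose_add, conjTranspose_one, conjTranspose_smul, hPherm, Complex.star_def, h1]
  refine ⟨?_, ?_, ?_⟩
  · -- γ 0 = 1
    rw [hγ5 0]
    rw [show ((0 * b₁ : ℝ) : ℂ) * Complex.I = 0 from by push_cast; ring,
      show ((0 * b₂ : ℝ) : ℂ) * Complex.I = 0 from by push_cast; ring]
    simp only [Complex.exp_zero, sub_self, zero_smul, add_zero, mul_one]
    rw [proj_mul H hH2, proj_mul H hH2]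
    have h : Complex.exp ((a₁ : ℂ) * Complex.I) * Complex.exp (((a₂ - a₁ : ℝ) : ℂ) * Complex.I)
        * Complex.exp (((-a₂ : ℝ) : ℂ) * Complex.I) = 1 := by
      rw [← Complex.exp_add, ← Complex.exp_add]
      have : ((a₁ : ℂ) * Complex.I + ((a₂ - a₁ : ℝ) : ℂ) * Complex.I
          + ((-a₂ : ℝ) : ℂ) * Complex.I) = 0 := by push_cast; ring
      rw [this, Complex.exp_zero]
    rw [h]; simp
  · -- unitary
    intro t
    rw [hγ5 t]
    simp only [conjTranspose_mul, hstarH, hstarP, mul_assoc]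
    rw [proj_cancel H hH2 a₁, proj_cancel P hPP (t * b₁), proj_cancel H hH2 (a₂ - a₁),
      proj_cancel P hPP (t * b₂), proj_mul H hH2]
    have h : Complex.exp (((-(-a₂) : ℝ) : ℂ) * Complex.I)
        * Complex.exp (((-a₂ : ℝ) : ℂ) * Complex.I) = 1 := by
      rw [← Complex.exp_add]
      have : (((-(-a₂) : ℝ) : ℂ) * Complex.I + ((-a₂ : ℝ) : ℂ) * Complex.I) = 0 := by
        push_cast; ring
      rw [this, Complex.exp_zero]
    rw [h]; simp
  · -- derivative
    have hz : (R : ℂ) * Complex.exp ((A : ℂ) * Complex.I) = (x : ℂ) + (y : ℂ) * Complex.I := by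
      have habs : ‖(x : ℂ) + (y : ℂ) * Complex.I‖ = R := by
        rw [Complex.norm_def, Complex.normSq_add_mul_I, ← hR]
      rw [hA, ← habs]
      exact Complex.norm_mul_exp_arg_mul_I _
    have hz' : (R : ℂ) * Complex.exp (-(A : ℂ) * Complex.I)
        = (x : ℂ) - (y : ℂ) * Complex.I := by
      have h := congrArg (starRingEnd ℂ) hz
      rw [_root_.map_mul, Complex.conj_ofReal, ← Complex.exp_conj, _root_.map_mul,
        Complex.conj_ofReal, Complex.conj_I, map_add, _root_.map_mul, Complex.conj_ofReal,
        Complex.conj_ofReal, Complex.conj_I] at h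
      rw [show -(A : ℂ) * Complex.I = (A : ℂ) * -Complex.I from by ring, h]
      ring
    have hI2 : Complex.exp ((π : ℂ) / 2 * Complex.I) = Complex.I := by
      rw [show (π : ℂ) / 2 = ((π / 2 : ℝ) : ℂ) from by push_cast; ring, Complex.exp_mul_I,
        ← Complex.ofReal_cos, ← Complex.ofReal_sin, Real.cos_pi_div_two, Real.sin_pi_div_two]
      norm_num
    have he1 : Complex.exp ((a₁ : ℂ) * Complex.I)
        = Complex.I * Complex.exp ((A : ℂ) * Complex.I) := by
      rw [ha₁]; push_cast
      rw [add_mul, Complex.exp_add, hI2]; ring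
    have hemid : Complex.exp (((a₂ - a₁ : ℝ) : ℂ) * Complex.I) = -1 := by
      rw [show (a₂ - a₁ : ℝ) = -π from by rw [ha₁, ha₂]; ring]
      push_cast
      rw [show -(π : ℂ) * Complex.I = -((π : ℂ) * Complex.I) from by ring, Complex.exp_neg,
        Complex.exp_pi_mul_I]
      norm_num
    have he3 : Complex.exp (((-a₂ : ℝ) : ℂ) * Complex.I)
        = Complex.I * Complex.exp (-(A : ℂ) * Complex.I) := by
      rw [show (-a₂ : ℝ) = π / 2 + -A from by rw [ha₂]; ring]
      push_cast
      rw [add_mul, Complex.exp_add, hI2]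
    have hb1c : ((b₁ : ℝ) : ℂ) = -((R : ℂ) / 2) := by rw [hb₁]; push_cast; ring
    have hb2c : ((b₂ : ℝ) : ℂ) = (R : ℂ) / 2 := by rw [hb₂]; push_cast; ring
    have hαβ : ∀ t : ℝ, Complex.exp (((t * b₁ : ℝ) : ℂ) * Complex.I)
        * Complex.exp (((t * b₂ : ℝ) : ℂ) * Complex.I) = 1 := by
      intro t
      rw [← Complex.exp_add, show (((t * b₁ : ℝ) : ℂ) * Complex.I
        + ((t * b₂ : ℝ) : ℂ) * Complex.I) = 0 from by rw [hb₁, hb₂]; push_cast; ring,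
        Complex.exp_zero]
    set C₁ : Matrix (Fin N) (Fin N) ℂ
      := 1 + (Complex.exp ((a₁ : ℂ) * Complex.I) - 1) • H with hC₁
    set C₂ : Matrix (Fin N) (Fin N) ℂ
      := 1 + (Complex.exp (((a₂ - a₁ : ℝ) : ℂ) * Complex.I) - 1) • H with hC₂
    set C₃ : Matrix (Fin N) (Fin N) ℂ
      := 1 + (Complex.exp (((-a₂ : ℝ) : ℂ) * Complex.I) - 1) • H with hC₃
    set K₁ : Matrix (Fin N) (Fin N) ℂ
      := C₁ * (P * (C₂ * C₃)) - C₁ * (P * (C₂ * (P * C₃))) with hK₁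
    set K₂ : Matrix (Fin N) (Fin N) ℂ
      := C₁ * (C₂ * (P * C₃)) - C₁ * (P * (C₂ * (P * C₃))) with hK₂
    have hgam : ∀ t : ℝ, γ t = (C₁ * C₂ * C₃ - K₁ - K₂)
        + Complex.exp (((t * b₁ : ℝ) : ℂ) * Complex.I) • K₁
        + Complex.exp (((t * b₂ : ℝ) : ℂ) * Complex.I) • K₂ := by
      intro t
      rw [hγ5 t, hK₁, hK₂]
      exact five_expand C₁ C₂ C₃ P _ _ (hαβ t)
    have hc : ∀ b : ℝ, HasDerivAt (fun t : ℝ => Complex.exp (((t * b : ℝ) : ℂ) * Complex.I))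
        ((b : ℂ) * Complex.I) 0 := by
      intro b
      have h0 : HasDerivAt (fun t : ℝ => (((t * b : ℝ) : ℂ) * Complex.I))
          ((b : ℂ) * Complex.I) 0 := by
        have heq : (fun t : ℝ => (((t * b : ℝ) : ℂ) * Complex.I))
            = fun t : ℝ => (t : ℂ) * ((b : ℂ) * Complex.I) := by
          funext t; push_cast; ring
        rw [heq]
        simpa using (Complex.ofRealCLM.hasDerivAt (x := (0 : ℝ))).mul_const
          ((b : ℂ) * Complex.I)
      simpa using h0.cexp
    have hder : HasDerivAt γ (((b₁ : ℂ) * Complex.I) • K₁ + ((b₂ : ℂ) * Complex.I) • K₂) 0 := by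
      have h := (((hc b₁).smul_const K₁).const_add (C₁ * C₂ * C₃ - K₁ - K₂)).add
        ((hc b₂).smul_const K₂)
      have hfun : γ = fun t => (C₁ * C₂ * C₃ - K₁ - K₂)
          + Complex.exp (((t * b₁ : ℝ) : ℂ) * Complex.I) • K₁
          + Complex.exp (((t * b₂ : ℝ) : ℂ) * Complex.I) • K₂ := funext hgam
      rw [hfun]; exact h
    suffices hval : ((b₁ : ℂ) * Complex.I) • K₁ + ((b₂ : ℂ) * Complex.I) • K₂
        = x • X₀ + y • Y₀ by
      rw [← hval]; exact hder
    have hrs : ∀ (r : ℝ) (M : Matrix (Fin N) (Fin N) ℂ), r • M = ((r : ℂ)) • M := by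
      intro r M; ext i j
      simp [Matrix.smul_apply, Complex.real_smul]
    rw [hK₁, hK₂, hC₁, hC₂, hC₃, he1, hemid, he3, hb1c, hb2c, hY, hX, hrs x, hrs y]
    have hH2r : ∀ X : Matrix (Fin N) (Fin N) ℂ, X * H * H = X * H := by
      intro X; rw [mul_assoc, hH2]
    have hPPr : ∀ X : Matrix (Fin N) (Fin N) ℂ, X * P * P = X * P := by
      intro X; rw [mul_assoc, hPP]
    simp only [mul_add, add_mul, mul_one, one_mul, smul_mul_assoc, mul_smul_comm, smul_smul,
      smul_sub, smul_add, sub_mul, mul_sub, ← mul_assoc, hH2, hPP, hH2r, hPPr]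
    match_scalars <;>
      first
        | ring1
        | linear_combination hz
        | linear_combination hz'
        | linear_combination -hz
        | linear_combination -hz'
        | linear_combination hz - hz'
        | linear_combination hz' - hz
        | linear_combination hz + hz'
        | linear_combination -hz - hz'
        | linear_combination hz - (↑R * Complex.exp ((A : ℂ) * Complex.I)) * Complex.I_sq
        | linear_combination -hz' + (↑R * Complex.exp (-(A : ℂ) * Complex.I)) * Complex.I_sq
        | linear_combination (↑R * Complex.exp ((A : ℂ) * Complex.I)
            - ↑R * Complex.exp (-(A : ℂ) * Complex.I)) * Complex.I_sq - hz + hz'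
end

section
/- Let f: M → ℝ be defined on a complete Riemannian manifold and consider the retraction-based gradient iteration x_{k+1} = Retr_{x_k}(-(1/L)·grad f(x_k)). If the pullback g(t) = f(Retr_x(t·η)) satisfies the uniform smoothness bound f(Retr_x(η)) ≤ f(x) + ⟨grad f(x), η⟩ + (L/2)‖η‖² for all x ∈ M and tangent η, and f is bounded below by f*, then min_{0≤k≤T-1} ‖grad f(x_k)‖ ≤ ε whenever T ≥ ⌈2L(f(x₀) - f*)/ε²⌉. -/
open RealInnerProductSpace

/-- Iteration complexity of retraction-based gradient descent: under the uniform
smoothness bound for the pullback and boundedness below, the iterates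
`x_{k+1} = Retr_{x_k}(-(1/L) grad f(x_k))` reach a point with gradient norm at most
`ε` within `T ≥ ⌈2L(f(x₀) - f*)/ε²⌉` iterations. -/
theorem stmt_17 {M : Type*} {T : M → Type*}
    [∀ p, NormedAddCommGroup (T p)] [∀ p, InnerProductSpace ℝ (T p)]
    (f : M → ℝ) (gradf : ∀ p, T p) (Retr : ∀ p, T p → M)
    (hRetr0 : ∀ p, Retr p 0 = p)
    (L : ℝ) (hL : 0 < L)
    (hsmooth : ∀ p (η : T p),
      f (Retr p η) ≤ f p + ⟪gradf p, η⟫ + L / 2 * ‖η‖ ^ 2)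
    (fstar : ℝ) (hbound : ∀ p, fstar ≤ f p)
    (x : ℕ → M)
    (hx : ∀ k, x (k + 1) = Retr (x k) (-(1 / L) • gradf (x k)))
    (ε : ℝ) (hε : 0 < ε)
    (Titer : ℕ) (hT1 : 1 ≤ Titer)
    (hT : (⌈2 * L * (f (x 0) - fstar) / ε ^ 2⌉ : ℤ) ≤ (Titer : ℤ)) :
    ∃ k < Titer, ‖gradf (x k)‖ ≤ ε := by
  by_contra h
  push_neg at h
  -- decrease lemma
  have hdec : ∀ k, f (x (k + 1)) ≤ f (x k) - ‖gradf (x k)‖ ^ 2 / (2 * L) := by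
    intro k
    have h1 := hsmooth (x k) (-(1 / L) • gradf (x k))
    rw [hx k]
    have hinner : ⟪gradf (x k), -(1 / L) • gradf (x k)⟫ = -(1 / L) * ‖gradf (x k)‖ ^ 2 := by
      rw [real_inner_smul_right, real_inner_self_eq_norm_sq]
    have hnorm : ‖-(1 / L) • gradf (x k)‖ ^ 2 = (1 / L) ^ 2 * ‖gradf (x k)‖ ^ 2 := by
      rw [norm_smul]
      rw [Real.norm_eq_abs, abs_neg, abs_of_pos (by positivity : (0:ℝ) < 1 / L)]
      ring
    rw [hinner, hnorm] at h1
    have hLne : L ≠ 0 := ne_of_gt hL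
    calc f (Retr (x k) (-(1 / L) • gradf (x k)))
        ≤ f (x k) + -(1 / L) * ‖gradf (x k)‖ ^ 2 + L / 2 * ((1 / L) ^ 2 * ‖gradf (x k)‖ ^ 2) := h1
      _ = f (x k) - ‖gradf (x k)‖ ^ 2 / (2 * L) := by field_simp; ring
  -- telescoping
  have hsum : ∀ n, f (x n) ≤ f (x 0) - ∑ k ∈ Finset.range n, ‖gradf (x k)‖ ^ 2 / (2 * L) := by
    intro n
    induction n with
    | zero => simp
    | succ n ih =>
      rw [Finset.sum_range_succ]
      have := hdec n
      linarith
  -- strict lower bound on the sum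
  have hstrict : (Titer : ℝ) * (ε ^ 2 / (2 * L)) <
      ∑ k ∈ Finset.range Titer, ‖gradf (x k)‖ ^ 2 / (2 * L) := by
    have : ∑ k ∈ Finset.range Titer, (ε ^ 2 / (2 * L)) <
        ∑ k ∈ Finset.range Titer, ‖gradf (x k)‖ ^ 2 / (2 * L) := by
      apply Finset.sum_lt_sum_of_nonempty
      · exact Finset.nonempty_range_iff.mpr (by omega)
      · intro k hk
        have hk' := h k (Finset.mem_range.mp hk)
        have : ε ^ 2 < ‖gradf (x k)‖ ^ 2 := by
          apply pow_lt_pow_left₀ hk' (le_of_lt hε) (by norm_num)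
        gcongr
    simpa [Finset.sum_const, Finset.card_range, mul_comm] using this
  have hfT := hsum Titer
  have hfb := hbound (x Titer)
  -- Titer < 2L(f0 - fstar)/ε²
  have hlt : (Titer : ℝ) < 2 * L * (f (x 0) - fstar) / ε ^ 2 := by
    have h2 : (Titer : ℝ) * (ε ^ 2 / (2 * L)) < f (x 0) - fstar := by linarith
    rw [lt_div_iff₀ (by positivity : (0:ℝ) < ε ^ 2)]
    have := mul_lt_mul_of_pos_right h2 (by positivity : (0:ℝ) < 2 * L)
    calc (Titer : ℝ) * ε ^ 2 = (Titer : ℝ) * (ε ^ 2 / (2 * L)) * (2 * L) := by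
          field_simp
      _ < (f (x 0) - fstar) * (2 * L) := this
      _ = 2 * L * (f (x 0) - fstar) := by ring
  have hceil : (2 * L * (f (x 0) - fstar) / ε ^ 2 : ℝ) ≤ (⌈2 * L * (f (x 0) - fstar) / ε ^ 2⌉ : ℤ) :=
    Int.le_ceil _
  have : (Titer : ℝ) < (Titer : ℝ) := by
    calc (Titer : ℝ) < 2 * L * (f (x 0) - fstar) / ε ^ 2 := hlt
      _ ≤ ((⌈2 * L * (f (x 0) - fstar) / ε ^ 2⌉ : ℤ) : ℝ) := hceil
      _ ≤ (Titer : ℝ) := by exact_mod_cast hT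
  exact absurd this (lt_irrefl _)
end

section
/- Let H be an orthogonal projector of rank M on ℂ^N (1 ≤ M ≤ N-1), |ψ₀⟩ the uniform superposition, and c₀ = √(2M(N-M))/N. For the length-5 product retraction R_U(η) = exp(ia₁H)exp(ib₁ψ₀)exp(i(a₂-a₁)H)exp(ib₂ψ₀)exp(-ia₂H)·U with parameters a₁ = A+π/2, a₂ = A-π/2, b₁ = -R/2, b₂ = R/2 (A = atan2(y,x), R = √(x²+y²)) applied to tangent vectors η = (xX₀ + yY₀)U, the first-order bound ‖R_U(η) - U‖_F ≤ ‖η‖_F holds for all U ∈ U(N) and all such η. -/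
open Matrix Real

set_option maxHeartbeats 1000000 in
lemma exp_idem_s19 {n : ℕ} (Q : Matrix (Fin n) (Fin n) ℂ) (hQ : Q * Q = Q) (z : ℂ) :
    NormedSpace.exp (z • Q) = 1 + (Complex.exp z - 1) • Q := by
  letI : SeminormedRing (Matrix (Fin n) (Fin n) ℂ) := Matrix.linftyOpSemiNormedRing
  letI : NormedRing (Matrix (Fin n) (Fin n) ℂ) := Matrix.linftyOpNormedRing
  letI : NormedAlgebra ℂ (Matrix (Fin n) (Fin n) ℂ) := Matrix.linftyOpNormedAlgebra
  have hQpow : ∀ k : ℕ, Q ^ (k + 1) = Q := by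
    intro k
    induction k with
    | zero => simp
    | succ k ih => rw [pow_succ, ih, hQ]
  have hpow : ∀ k : ℕ, (z • Q) ^ (k + 1) = z ^ (k + 1) • Q := by
    intro k; rw [smul_pow, hQpow]
  have hsum : Summable (fun k : ℕ => ((Nat.factorial k : ℂ))⁻¹ • (z • Q) ^ k) :=
    NormedSpace.expSeries_summable' (𝕂 := ℂ) (z • Q)
  have hsumC : Summable (fun k : ℕ => ((Nat.factorial k : ℂ))⁻¹ • z ^ k) :=
    NormedSpace.expSeries_summable' (𝕂 := ℂ) z
  simp only [NormedSpace.exp_eq_tsum (𝕂 := ℂ)]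
  rw [Summable.tsum_eq_zero_add hsum]
  have hc : ∀ k : ℕ, ((Nat.factorial (k+1) : ℂ))⁻¹ • (z • Q) ^ (k + 1)
      = (((Nat.factorial (k+1) : ℂ))⁻¹ • z ^ (k + 1)) • Q := by
    intro k; rw [hpow, smul_smul, smul_eq_mul]
  rw [tsum_congr hc]
  rw [Summable.tsum_smul_const (f := fun k : ℕ => ((Nat.factorial (k+1) : ℂ))⁻¹ • z ^ (k + 1))
    ((summable_nat_add_iff 1).2 hsumC) Q]
  have h0 : ((Nat.factorial 0 : ℂ))⁻¹ • (z • Q) ^ 0 = (1 : Matrix (Fin n) (Fin n) ℂ) := by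
    simp
  rw [h0]
  congr 1
  have h2 : Complex.exp z = ∑' k : ℕ, ((Nat.factorial k : ℂ))⁻¹ • z ^ k := by
    rw [Complex.exp_eq_exp_ℂ]
    exact congrFun (NormedSpace.exp_eq_tsum (𝕂 := ℂ)) z
  rw [h2, Summable.tsum_eq_zero_add hsumC]
  simp [smul_eq_mul]

set_option maxHeartbeats 1000000 in
lemma trace_combo {n : ℕ} (Q₁ Q₂ : Matrix (Fin n) (Fin n) ℂ)
    (h1 : Q₁ * Q₁ = Q₁) (h2 : Q₂ * Q₂ = Q₂)
    (h1c : Q₁ᴴ = Q₁) (h2c : Q₂ᴴ = Q₂)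
    (ht1 : Q₁.trace = 1) (ht2 : Q₂.trace = 1)
    (c₁ c₂ τ : ℂ) (ht12 : (Q₁ * Q₂).trace = τ) :
    ((c₁ • Q₁ + c₂ • Q₂ + (c₁ * c₂) • (Q₁ * Q₂))ᴴ *
      (c₁ • Q₁ + c₂ • Q₂ + (c₁ * c₂) • (Q₁ * Q₂))).trace
      = (starRingEnd ℂ c₁ * c₁ + starRingEnd ℂ c₂ * c₂)
        + (starRingEnd ℂ c₁ * c₂ + starRingEnd ℂ c₂ * c₁
          + (starRingEnd ℂ c₁ + starRingEnd ℂ c₂) * (c₁ * c₂)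
          + (starRingEnd ℂ c₂ * starRingEnd ℂ c₁) * (c₁ + c₂ + c₁ * c₂)) * τ := by
  have ht21 : (Q₂ * Q₁).trace = τ := by rw [Matrix.trace_mul_comm]; exact ht12
  have ta : (Q₁ * Q₁).trace = 1 := by rw [h1]; exact ht1
  have td : (Q₂ * Q₂).trace = 1 := by rw [h2]; exact ht2
  have te : (Q₁ * (Q₁ * Q₂)).trace = τ := by rw [← mul_assoc, h1]; exact ht12
  have tf : (Q₂ * (Q₁ * Q₂)).trace = τ := by
    rw [Matrix.trace_mul_comm, mul_assoc, h2]; exact ht12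
  have tg : (Q₂ * Q₁ * Q₁).trace = τ := by rw [mul_assoc, h1]; exact ht21
  have th' : (Q₂ * Q₁ * Q₂).trace = τ := by
    rw [Matrix.trace_mul_comm, ← mul_assoc, h2]; exact ht21
  have ti : (Q₂ * Q₁ * (Q₁ * Q₂)).trace = τ := by
    rw [mul_assoc, ← mul_assoc Q₁ Q₁ Q₂, h1]; exact tf
  simp only [conjTranspose_add, conjTranspose_smul, conjTranspose_mul, h1c, h2c,
    Matrix.add_mul, Matrix.mul_add, smul_mul_assoc, mul_smul_comm, smul_smul,
    Matrix.trace_add, Matrix.trace_smul, Complex.star_def, _root_.map_mul]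
  simp only [ta, td, ht12, ht21, te, tf, tg, th', ti, smul_eq_mul]
  ring

set_option maxHeartbeats 4000000 in
/-- First-order bound for the length-5 product retraction: for the rank-`M`
coordinate projector `H`, the uniform superposition `ψ₀`, and tangent vectors
`η = (xX₀ + yY₀)U`, one has `‖R_U(η) - U‖_F ≤ ‖η‖_F` for all unitary `U`. -/
theorem stmt_19 (N M : ℕ) (hN : 2 ≤ N) (hM1 : 1 ≤ M) (hM2 : M ≤ N - 1)
    (H : Matrix (Fin N) (Fin N) ℂ)
    (hHdef : H = Matrix.diagonal (fun i : Fin N => if (i : ℕ) < M then (1 : ℂ) else 0))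
    (ψ₀ : Fin N → ℂ) (hψdef : ψ₀ = fun _ => (((Real.sqrt N)⁻¹ : ℝ) : ℂ))
    (P X₀ Y₀ : Matrix (Fin N) (Fin N) ℂ)
    (hP : P = vecMulVec ψ₀ (star ψ₀))
    (hX : X₀ = H * P - P * H)
    (hY : Y₀ = Complex.I • (H * X₀ - X₀ * H))
    (U : Matrix (Fin N) (Fin N) ℂ) (hU : U ∈ Matrix.unitaryGroup (Fin N) ℂ)
    (x y : ℝ)
    (A R a₁ a₂ b₁ b₂ : ℝ)
    (hA : A = Complex.arg ((x : ℂ) + (y : ℂ) * Complex.I))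
    (hR : R = Real.sqrt (x ^ 2 + y ^ 2))
    (ha₁ : a₁ = A + π / 2) (ha₂ : a₂ = A - π / 2)
    (hb₁ : b₁ = -R / 2) (hb₂ : b₂ = R / 2)
    (Rη : Matrix (Fin N) (Fin N) ℂ)
    (hRη : Rη =
      NormedSpace.exp (((a₁ : ℂ) * Complex.I) • H) *
      NormedSpace.exp (((b₁ : ℂ) * Complex.I) • P) *
      NormedSpace.exp ((((a₂ - a₁ : ℝ) : ℂ) * Complex.I) • H) *
      NormedSpace.exp (((b₂ : ℂ) * Complex.I) • P) *
      NormedSpace.exp ((-((a₂ : ℂ)) * Complex.I) • H) * U) :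
    frobNorm (Rη - U) ≤ frobNorm ((x • X₀ + y • Y₀) * U) := by
  have hNne : (N : ℂ) ≠ 0 := Nat.cast_ne_zero.2 (by omega)
  have hNR0 : (0:ℝ) < (N:ℝ) := by exact_mod_cast Nat.pos_of_ne_zero (by omega)
  set p : ℂ := (M : ℂ) / (N : ℂ) with hpdef
  set κ : ℂ := ((N : ℂ))⁻¹ with hκdef
  -- entries of P
  have hPij : ∀ i j, P i j = κ := by
    intro i j
    rw [hP, hψdef]
    simp only [vecMulVec_apply, Pi.star_apply, Complex.star_def, Complex.conj_ofReal]
    rw [← Complex.ofReal_mul, ← mul_inv, Real.mul_self_sqrt (by positivity), hκdef]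
    simp
  -- sum of the diagonal indicator
  have hsumM : (∑ j : Fin N, (if (j:ℕ) < M then (1:ℂ) else 0)) = (M : ℂ) := by
    rw [Fin.sum_univ_eq_sum_range (fun i => if i < M then (1:ℂ) else 0) N]
    rw [← Finset.sum_filter]
    have hfil : (Finset.range N).filter (fun i => i < M) = Finset.range M := by
      ext a; simp only [Finset.mem_filter, Finset.mem_range]; omega
    simp [hfil]
  have hHH : H * H = H := by
    have hfun : (fun i : Fin N => (if (i:ℕ) < M then (1:ℂ) else 0) * (if (i:ℕ) < M then (1:ℂ) else 0))
        = (fun i : Fin N => if (i:ℕ) < M then (1:ℂ) else 0) := by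
      funext i; by_cases h : (i:ℕ) < M <;> simp [h]
    rw [hHdef, diagonal_mul_diagonal, hfun]
  have hHct : Hᴴ = H := by
    have hfun : (star fun i : Fin N => (if (i:ℕ) < M then (1:ℂ) else 0))
        = (fun i : Fin N => if (i:ℕ) < M then (1:ℂ) else 0) := by
      funext i; by_cases h : (i:ℕ) < M <;> simp [h, Pi.star_apply]
    rw [hHdef, diagonal_conjTranspose, hfun]
  have hPP : P * P = P := by
    ext i j
    rw [Matrix.mul_apply]
    simp only [hPij]
    rw [Finset.sum_const, Finset.card_univ, Fintype.card_fin, nsmul_eq_mul, hκdef]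
    field_simp
  have hPct : Pᴴ = P := by
    ext i j
    rw [Matrix.conjTranspose_apply]
    simp only [hPij, hκdef, Complex.star_def, map_inv₀, Complex.conj_natCast]
  have hPHentry : ∀ i j, (P * H) i j = κ * (if (j:ℕ) < M then 1 else 0) := by
    intro i j
    rw [hHdef, Matrix.mul_diagonal, hPij]
  have htrP : P.trace = 1 := by
    rw [Matrix.trace]
    simp only [Matrix.diag_apply, hPij]
    rw [Finset.sum_const, Finset.card_univ, Fintype.card_fin, nsmul_eq_mul, hκdef]
    field_simp
  have htrPH : (P * H).trace = p := by
    rw [Matrix.trace]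
    simp only [Matrix.diag_apply, hPHentry]
    rw [← Finset.mul_sum, hsumM, hκdef, hpdef]
    ring
  have hPHP : P * H * P = p • P := by
    ext i j
    rw [Matrix.mul_apply]
    simp only [hPHentry, hPij, Matrix.smul_apply, smul_eq_mul]
    calc (∑ k : Fin N, κ * (if (k:ℕ) < M then 1 else 0) * κ)
        = (∑ k : Fin N, (if (k:ℕ) < M then (1:ℂ) else 0)) * (κ * κ) := by
          rw [Finset.sum_mul]; congr 1; funext k; ring
      _ = p * κ := by
          rw [hsumM, hpdef, hκdef]
          field_simp
  -- affine exponentials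
  set B : ℝ → ℂ := fun b => Complex.exp ((b:ℂ) * Complex.I) - 1 with hBdef
  set eH : ℝ → Matrix (Fin N) (Fin N) ℂ :=
    fun a => 1 + (Complex.exp ((a:ℂ) * Complex.I) - 1) • H with heHdef
  have hexpH : ∀ a : ℝ, NormedSpace.exp (((a:ℂ) * Complex.I) • H) = eH a := by
    intro a; simp only [heHdef]; exact exp_idem_s19 H hHH _
  have hexpP : ∀ b : ℝ, NormedSpace.exp (((b:ℂ) * Complex.I) • P) = 1 + (B b) • P := by
    intro b; simp only [hBdef]; exact exp_idem_s19 P hPP _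
  have heHmul : ∀ a b : ℝ, eH a * eH b = eH (a + b) := by
    intro a b
    simp only [heHdef]
    have hexp : Complex.exp (((a + b : ℝ):ℂ) * Complex.I)
        = Complex.exp ((a:ℂ) * Complex.I) * Complex.exp ((b:ℂ) * Complex.I) := by
      rw [← Complex.exp_add]; push_cast; ring_nf
    rw [hexp]
    simp only [mul_add, add_mul, mul_one, one_mul, mul_smul_comm, smul_mul_assoc,
      smul_smul, hHH]
    module
  have heH0 : eH 0 = 1 := by
    simp [heHdef]
  have hinv : ∀ a : ℝ, eH a * eH (-a) = 1 := by
    intro a; rw [heHmul, show a + -a = (0:ℝ) by ring, heH0]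
  have hinv' : ∀ a : ℝ, eH (-a) * eH a = 1 := by
    intro a; rw [heHmul, show -a + a = (0:ℝ) by ring, heH0]
  have heHct : ∀ a : ℝ, (eH a)ᴴ = eH (-a) := by
    intro a
    simp only [heHdef, conjTranspose_add, conjTranspose_one, conjTranspose_smul, hHct]
    have hst : star (Complex.exp ((a:ℂ) * Complex.I) - 1)
        = Complex.exp (((-a : ℝ):ℂ) * Complex.I) - 1 := by
      rw [star_sub, star_one, Complex.star_def, ← Complex.exp_conj]
      congr 1
      simp [Complex.conj_ofReal]
    rw [hst]
  -- conjugated projectors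
  set Q : ℝ → Matrix (Fin N) (Fin N) ℂ := fun a => eH a * P * eH (-a) with hQdef
  have hQsq : ∀ a : ℝ, Q a * Q a = Q a := by
    intro a
    simp only [hQdef]
    have h : eH a * P * eH (-a) * (eH a * P * eH (-a))
        = eH a * (P * ((eH (-a) * eH a) * P)) * eH (-a) := by noncomm_ring
    rw [h, hinv' a, one_mul, hPP]
  have hQct : ∀ a : ℝ, (Q a)ᴴ = Q a := by
    intro a
    simp only [hQdef, conjTranspose_mul, hPct, heHct, neg_neg]
    noncomm_ring
  have htrQ : ∀ a : ℝ, (Q a).trace = 1 := by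
    intro a
    simp only [hQdef]
    rw [Matrix.trace_mul_comm, ← mul_assoc, hinv' a, one_mul, htrP]
  -- the middle reflection
  have heHpi : eH (-π) = 1 + (-2 : ℂ) • H := by
    simp only [heHdef]
    congr 2
    push_cast
    rw [neg_mul, Complex.exp_neg, Complex.exp_pi_mul_I]
    norm_num
  have heHpi' : eH π = 1 + (-2 : ℂ) • H := by
    simp only [heHdef]
    congr 2
    rw [Complex.exp_pi_mul_I]
    norm_num
  have hab : a₂ - a₁ = -π := by rw [ha₁, ha₂]; ring
  have hba : a₁ - a₂ = π := by rw [ha₁, ha₂]; ring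
  have hPSP : P * ((1 + (-2 : ℂ) • H) * P) = (1 - 2*p) • P := by
    rw [add_mul, one_mul, smul_mul_assoc, mul_add, mul_smul_comm, hPP,
      ← mul_assoc, hPHP, smul_smul]
    module
  have hτ : (Q a₁ * Q a₂).trace = (1 - 2*p)^2 := by
    have hmid : eH (-a₁) * eH a₂ = eH (-π) := by
      rw [heHmul, show -a₁ + a₂ = a₂ - a₁ by ring, hab]
    have hmid' : eH (-a₂) * eH a₁ = eH π := by
      rw [heHmul, show -a₂ + a₁ = a₁ - a₂ by ring, hba]
    have h1 : Q a₁ * Q a₂ = eH a₁ * ((P * ((eH (-a₁) * eH a₂) * P)) * eH (-a₂)) := by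
      simp only [hQdef]; noncomm_ring
    rw [h1, Matrix.trace_mul_comm, mul_assoc, hmid', hmid, heHpi, heHpi', hPSP]
    rw [smul_mul_assoc, Matrix.trace_smul, mul_add, mul_one, mul_smul_comm,
      Matrix.trace_add, Matrix.trace_smul, htrP, htrPH]
    simp only [smul_eq_mul]
    ring
  -- expressing the retraction
  have hF : ∀ a b : ℝ, eH a * (1 + (B b) • P) * eH (-a) = 1 + (B b) • (Q a) := by
    intro a b
    simp only [hQdef, mul_add, add_mul, mul_one, one_mul, mul_smul_comm, smul_mul_assoc]
    rw [hinv a]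
  have hRη' : Rη - U = ((B b₁) • Q a₁ + (B b₂) • Q a₂
      + ((B b₁) * (B b₂)) • (Q a₁ * Q a₂)) * U := by
    have hmid : eH (a₂ - a₁) = eH (-a₁) * eH a₂ := by
      rw [heHmul, show -a₁ + a₂ = a₂ - a₁ by ring]
    have hneg : (-(a₂:ℂ)) * Complex.I = ((-a₂ : ℝ):ℂ) * Complex.I := by push_cast; ring
    have h5 : Rη = (eH a₁ * (1 + (B b₁) • P) * eH (-a₁))
        * (eH a₂ * (1 + (B b₂) • P) * eH (-a₂)) * U := by
      rw [hRη, hexpH a₁, hexpP b₁, hexpH (a₂ - a₁), hexpP b₂, hneg, hexpH (-a₂), hmid]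
      noncomm_ring
    rw [h5, hF a₁ b₁, hF a₂ b₂]
    have hexpand : (1 + (B b₁) • Q a₁) * (1 + (B b₂) • Q a₂)
        = 1 + ((B b₁) • Q a₁ + (B b₂) • Q a₂ + ((B b₁) * (B b₂)) • (Q a₁ * Q a₂)) := by
      rw [add_mul, one_mul, mul_add, mul_one, smul_mul_assoc, mul_smul_comm, smul_smul]
      abel
    rw [hexpand, add_mul, one_mul, add_sub_cancel_left]
  -- unitary invariance of the Frobenius-trace
  have hUU : U * Uᴴ = 1 := by
    have := (Matrix.mem_unitaryGroup_iff.mp hU)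
    rwa [Matrix.star_eq_conjTranspose] at this
  have hfrob : ∀ W : Matrix (Fin N) (Fin N) ℂ, ((W * U)ᴴ * (W * U)).trace = (Wᴴ * W).trace := by
    intro W
    rw [conjTranspose_mul, Matrix.trace_mul_comm]
    have h : W * U * (Uᴴ * Wᴴ) = W * (U * Uᴴ) * Wᴴ := by noncomm_ring
    rw [h, hUU, mul_one, Matrix.trace_mul_comm]
  -- the left-hand trace
  have htraceL : ((Rη - U)ᴴ * (Rη - U)).trace
      = (starRingEnd ℂ (B b₁) * (B b₁) + starRingEnd ℂ (B b₂) * (B b₂))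
        + (starRingEnd ℂ (B b₁) * (B b₂) + starRingEnd ℂ (B b₂) * (B b₁)
          + (starRingEnd ℂ (B b₁) + starRingEnd ℂ (B b₂)) * ((B b₁) * (B b₂))
          + (starRingEnd ℂ (B b₂) * starRingEnd ℂ (B b₁))
            * ((B b₁) + (B b₂) + (B b₁) * (B b₂))) * ((1 - 2*p)^2) := by
    rw [hRη', hfrob]
    exact trace_combo (Q a₁) (Q a₂) (hQsq a₁) (hQsq a₂) (hQct a₁) (hQct a₂)
      (htrQ a₁) (htrQ a₂) (B b₁) (B b₂) ((1 - 2*p)^2) hτ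
  -- scalar evaluation of the left trace
  set pr : ℝ := (M:ℝ)/(N:ℝ) with hprdef
  have hppr : p = ((pr : ℝ) : ℂ) := by rw [hpdef, hprdef]; push_cast; ring
  set γ : ℂ := Complex.exp (((R/2 : ℝ):ℂ) * Complex.I) with hγdef
  set δ : ℂ := Complex.exp (((-(R/2) : ℝ):ℂ) * Complex.I) with hδdef
  have hγδ : γ * δ = 1 := by
    rw [hγdef, hδdef, ← Complex.exp_add,
      show ((R/2 : ℝ):ℂ) * Complex.I + ((-(R/2) : ℝ):ℂ) * Complex.I = 0 by push_cast; ring]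
    exact Complex.exp_zero
  have hB1 : B b₁ = δ - 1 := by
    simp only [hBdef, hδdef]
    rw [hb₁, show ((-R/2 : ℝ)) = (-(R/2) : ℝ) by ring]
  have hB2 : B b₂ = γ - 1 := by
    simp only [hBdef, hγdef]
    rw [hb₂]
  have hstarγ : starRingEnd ℂ γ = δ := by
    rw [hγdef, hδdef, ← Complex.exp_conj, _root_.map_mul, Complex.conj_ofReal, Complex.conj_I]
    congr 1
    push_cast; ring
  have hstarδ : starRingEnd ℂ δ = γ := by
    rw [hγdef, hδdef, ← Complex.exp_conj, _root_.map_mul, Complex.conj_ofReal, Complex.conj_I]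
    congr 1
    push_cast; ring
  have htraceL2 : ((Rη - U)ᴴ * (Rη - U)).trace = 2*(2 - (γ + δ))*(1 - (1-2*p)^2) := by
    rw [htraceL, hB1, hB2, _root_.map_sub, _root_.map_sub, _root_.map_one, hstarγ, hstarδ]
    linear_combination (γ*δ*((1-2*p)^2) - 3*((1-2*p)^2) + 2) * hγδ
  have hγδsum : γ + δ = ((2 * Real.cos (R/2) : ℝ):ℂ) := by
    rw [hγdef, hδdef, Complex.exp_mul_I, Complex.exp_mul_I,
      show ((-(R/2) : ℝ):ℂ) = -(((R/2 : ℝ)):ℂ) by push_cast; ring,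
      Complex.cos_neg, Complex.sin_neg, ← Complex.ofReal_cos]
    push_cast
    ring
  have htraceL3 : ((Rη - U)ᴴ * (Rη - U)).trace
      = ((2*(2 - 2*Real.cos (R/2))*(1 - (1-2*pr)^2) : ℝ) : ℂ) := by
    rw [htraceL2, hγδsum, hppr]
    push_cast
    ring
  -- the right-hand side
  have hrsmul : ∀ (r : ℝ) (X : Matrix (Fin N) (Fin N) ℂ), r • X = ((r:ℂ)) • X := by
    intro r X; ext i j; simp [Matrix.smul_apply, Complex.real_smul]
  have hkeyHP : P * (H * P) = p • P := by rw [← mul_assoc]; exact hPHP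
  have htrHP : (H * P).trace = p := by rw [Matrix.trace_mul_comm]; exact htrPH
  have htrHPH : (H * (P * H)).trace = p := by
    rw [Matrix.trace_mul_comm, mul_assoc, hHH]
    exact htrPH
  have hkey1 : P * (H * (P * H)) = p • (P * H) := by
    have h : P * (H * (P * H)) = (P * (H * P)) * H := by noncomm_ring
    rw [h, hkeyHP, smul_mul_assoc]
  have hkey2 : (P*H) * (H*P) = p • P := by
    have h : (P*H) * (H*P) = P * ((H*H) * P) := by noncomm_ring
    rw [h, hHH, hkeyHP]
  have hkey3 : (P*H) * (P*H) = p • (P*H) := by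
    have h : (P*H) * (P*H) = (P * (H * P)) * H := by noncomm_ring
    rw [h, hkeyHP, smul_mul_assoc]
  have hkey4 : (P*H) * (H*(P*H)) = p • (P*H) := by
    have h : (P*H) * (H*(P*H)) = (P * ((H*H) * P)) * H := by noncomm_ring
    rw [h, hHH, hkeyHP, smul_mul_assoc]
  have tw1 : ((P*H) * (H*P)).trace = p := by
    rw [hkey2, Matrix.trace_smul, htrP, smul_eq_mul, mul_one]
  have tw2 : ((P*H) * (P*H)).trace = p*p := by
    rw [hkey3, Matrix.trace_smul, htrPH, smul_eq_mul]
  have tw3 : ((P*H) * (H*(P*H))).trace = p*p := by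
    rw [hkey4, Matrix.trace_smul, htrPH, smul_eq_mul]
  have tw4 : ((H*P) * (H*P)).trace = p*p := by
    have h : (H*P) * (H*P) = H * (P * (H * P)) := by noncomm_ring
    rw [h, hkeyHP, mul_smul_comm, Matrix.trace_smul, htrHP, smul_eq_mul]
  have tw5 : ((H*P) * (P*H)).trace = p := by
    have h : (H*P) * (P*H) = H * ((P*P) * H) := by noncomm_ring
    rw [h, hPP]
    exact htrHPH
  have tw6 : ((H*P) * (H*(P*H))).trace = p*p := by
    have h : (H*P) * (H*(P*H)) = H * (P * (H * (P*H))) := by noncomm_ring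
    rw [h, hkey1, mul_smul_comm, Matrix.trace_smul, htrHPH, smul_eq_mul]
  have tw7 : ((H*(P*H)) * (H*P)).trace = p*p := by
    have h : (H*(P*H)) * (H*P) = H * ((P*H) * (H*P)) := by noncomm_ring
    rw [h, hkey2, mul_smul_comm, Matrix.trace_smul, htrHP, smul_eq_mul]
  have tw8 : ((H*(P*H)) * (P*H)).trace = p*p := by
    have h : (H*(P*H)) * (P*H) = H * ((P*H) * (P*H)) := by noncomm_ring
    rw [h, hkey3, mul_smul_comm, Matrix.trace_smul, htrHPH, smul_eq_mul]
  have tw9 : ((H*(P*H)) * (H*(P*H))).trace = p*p := by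
    have h : (H*(P*H)) * (H*(P*H)) = H * ((P*H) * (H*(P*H))) := by noncomm_ring
    rw [h, hkey4, mul_smul_comm, Matrix.trace_smul, htrHPH, smul_eq_mul]
  have hG1c : (H*P)ᴴ = P*H := by rw [conjTranspose_mul, hHct, hPct]
  have hG2c : (P*H)ᴴ = H*P := by rw [conjTranspose_mul, hHct, hPct]
  have hG3c : (H*(P*H))ᴴ = H*(P*H) := by
    rw [conjTranspose_mul, conjTranspose_mul, hHct, hPct, mul_assoc]
  have hZ : x • X₀ + y • Y₀ = ((x:ℂ)+(y:ℂ)*Complex.I) • (H*P)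
      + (-(x:ℂ)+(y:ℂ)*Complex.I) • (P*H) + ((-2*(y:ℂ))*Complex.I) • (H*(P*H)) := by
    rw [hrsmul x X₀, hrsmul y Y₀, hY, hX]
    have e1 : H*(H*P - P*H) = H*P - H*(P*H) := by rw [mul_sub, ← mul_assoc, hHH]
    have e2 : (H*P - P*H)*H = H*(P*H) - P*H := by
      rw [sub_mul, mul_assoc, mul_assoc, hHH]
    rw [e1, e2]
    module
  have htraceR1 : ((x • X₀ + y • Y₀)ᴴ * (x • X₀ + y • Y₀)).trace
      = 2*p*(1-p)*((x:ℂ)^2+(y:ℂ)^2) := by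
    rw [hZ]
    simp only [conjTranspose_add, conjTranspose_smul, hG1c, hG2c, hG3c]
    simp only [add_mul, mul_add, smul_mul_assoc, mul_smul_comm, smul_smul,
      Matrix.trace_add, Matrix.trace_smul, smul_eq_mul]
    simp only [tw1, tw2, tw3, tw4, tw5, tw6, tw7, tw8, tw9]
    simp only [Complex.star_def, _root_.map_add, _root_.map_mul, _root_.map_neg, _root_.map_ofNat,
      Complex.conj_ofReal, Complex.conj_I]
    linear_combination (2*(y:ℂ)^2*p^2 - 2*(y:ℂ)^2*p) * Complex.I_sq
  have htraceR2 : ((x • X₀ + y • Y₀)ᴴ * (x • X₀ + y • Y₀)).trace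
      = ((2*pr*(1-pr)*(x^2+y^2) : ℝ) : ℂ) := by
    rw [htraceR1, hppr]
    push_cast
    ring
  -- endgame
  have hprpos : 0 ≤ pr := by rw [hprdef]; positivity
  have hprle : pr ≤ 1 := by
    rw [hprdef, div_le_one hNR0]
    exact_mod_cast by omega
  have hR0 : 0 ≤ R := by rw [hR]; positivity
  have hxyR : x^2 + y^2 = R^2 := by rw [hR, Real.sq_sqrt (by positivity)]
  have hcosb : 2 - 2*Real.cos (R/2) ≤ R^2/4 := by
    have := Real.one_sub_sq_div_two_le_cos (x := R/2)
    nlinarith [this]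
  unfold frobNorm
  rw [hfrob (x • X₀ + y • Y₀), htraceL3, htraceR2, Complex.ofReal_re, Complex.ofReal_re]
  apply Real.sqrt_le_sqrt
  rw [hxyR]
  nlinarith [mul_nonneg (sub_nonneg.2 hcosb) (mul_nonneg hprpos (sub_nonneg.2 hprle))]
end
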